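/- arXiv:1404.1115 — 15 statements merged into one kernel-verified Lean document; each statement's English description precedes it below -/
import Mathlib

section
/- Let n ≥ 2 and k = ⌊n/2⌋. Let φ : ℚ[x₁,…,xₙ] → ℚ[y₁,…,y_k] be the ℚ-algebra homomorphism determined by φ(x_i) = y_i and φ(x_{k+i}) = −y_i for 1 ≤ i ≤ k, and (when n is odd) φ(xₙ) = 0. Then the image under φ of the subalgebra of symmetric polynomials of ℚ[x₁,…,xₙ] is exactly the subalgebra of ℚ[y₁,…,y_k] generated by the elementary symmetric polynomials e₁(y₁²,…,y_k²),…,e_k(y₁²,…,y_k²), i.e., the subalgebra of polynomials that are symmetric functions of the squares y₁²,…,y_k². -/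
/-!
Under `φ` the generating function `∏ (1 + xᵢ t)` of the elementary symmetric polynomials becomes
`∏ (1 + yᵢ t)(1 - yᵢ t) = ∏ (1 - yᵢ² t²)`, so `φ` kills `e_m` for odd `m` and sends `e_{2j}` to
`(-1)ʲ e_j(y₁², …, y_k²)`. As the symmetric polynomials form the subalgebra generated by
`e₁, …, eₙ`, their image is the subalgebra generated by the `e_j(y₁², …, y_k²)`.
-/

open MvPolynomial

namespace Multiset

variable {R : Type*}

theorem esymm_cons_succ [CommSemiring R] (a : R) (s : Multiset R) (k : ℕ) :
    (a ::ₘ s).esymm (k + 1) = s.esymm (k + 1) + a * s.esymm k := by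
  simp [esymm, powersetCard_cons, sum_map_mul_left]

theorem coeff_prod_one_add_C_mul_X [CommSemiring R] (s : Multiset R) (k : ℕ) :
    (s.map fun a => 1 + Polynomial.C a * Polynomial.X).prod.coeff k = s.esymm k := by
  induction s using Multiset.induction_on generalizing k with
  | empty => cases k <;> simp [esymm, Polynomial.coeff_one, powersetCard_zero_right]
  | cons a s ih =>
    cases k with
    | zero => simp [esymm, ih 0]
    | succ k => simp [add_mul, mul_assoc, Polynomial.coeff_X_mul, ih, esymm_cons_succ]

theorem esymm_add_replicate_zero [CommSemiring R] (s : Multiset R) (r k : ℕ) :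
    (s + replicate r 0).esymm k = s.esymm k := by
  simp [← coeff_prod_one_add_C_mul_X]

theorem esymm_add_map_neg [CommRing R] (s : Multiset R) (k : ℕ) :
    (s + s.map Neg.neg).esymm k =
      if 2 ∣ k then (-1) ^ (k / 2) * (s.map (· ^ 2)).esymm (k / 2) else 0 := by
  have hfactor (a : R) :
      (1 + Polynomial.C a * Polynomial.X) * (1 + Polynomial.C (-a) * Polynomial.X) =
      Polynomial.expand R 2 (1 + Polynomial.C (-a ^ 2) * Polynomial.X) := by
    simp only [_root_.map_add, map_mul, map_neg, map_pow, map_one, Polynomial.expand_C,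
      Polynomial.expand_X]
    ring
  have hprod : ((s + s.map Neg.neg).map fun a => 1 + Polynomial.C a * Polynomial.X).prod =
      Polynomial.expand R 2
        ((s.map (· ^ 2)).map Neg.neg |>.map fun a => 1 + Polynomial.C a * Polynomial.X).prod := by
    simp only [map_add, map_map, prod_add, Function.comp_def, map_multiset_prod, ← prod_map_mul,
      hfactor]
  rw [← coeff_prod_one_add_C_mul_X, hprod, Polynomial.coeff_expand two_pos,
    coeff_prod_one_add_C_mul_X, esymm_neg]

end Multiset

theorem Fin.univ_val_map_eq_add_map_neg_add_replicate {S : Type*} [Ring S] {n k : ℕ}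
    (hk : 2 * k ≤ n) (y : Fin k → S) (f : Fin n → S)
    (hf : ∀ i : Fin n, f i =
      if h1 : (i : ℕ) < k then y ⟨i, h1⟩
      else if h2 : (i : ℕ) < 2 * k then -y ⟨(i : ℕ) - k, by omega⟩
      else 0) :
    Finset.univ.val.map f = Finset.univ.val.map y + (Finset.univ.val.map y).map Neg.neg +
      Multiset.replicate (n - 2 * k) 0 := by
  simp only [Fin.univ_val_map, Multiset.map_coe, Multiset.coe_add]
  rw [List.ofFn_congr (show n = k + k + (n - 2 * k) by omega), List.ofFn_add, List.ofFn_add,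
    List.map_ofFn, ← Multiset.coe_replicate, ← List.ofFn_const, Multiset.coe_add]
  congr 3 <;> (try congr 1) <;> funext i
  · simp [hf]
  · simp [hf, two_mul]
  · rw [hf, dif_neg (by simp; omega), dif_neg (by simp; omega)]

namespace MvPolynomial

theorem symmetricSubalgebra_eq_adjoin_esymm {σ R : Type*} [CommRing R] [Fintype σ] {n : ℕ}
    (hn : Fintype.card σ ≤ n) :
    symmetricSubalgebra σ R =
      Algebra.adjoin R (Set.range fun i : Fin n => esymm σ R (i + 1)) := by
  have hcomp : aeval (fun i : Fin n => esymm σ R (i + 1)) =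
      (symmetricSubalgebra σ R).val.comp (esymmAlgHom σ R n) := by
    ext i
    simp [esymmAlgHom_apply]
  rw [Algebra.adjoin_range_eq_range_aeval, hcomp, AlgHom.range_comp,
    (esymmAlgHom σ R n).range_eq_top.mpr (esymmAlgHom_surjective R hn), Algebra.map_top,
    Subalgebra.range_val]

theorem apply_esymm_of_apply_X_eq_pm {R S : Type*} [CommRing R] [CommRing S] [Algebra R S]
    {n k : ℕ} (hk : 2 * k ≤ n) (y : Fin k → S) (φ : MvPolynomial (Fin n) R →ₐ[R] S)
    (hφ : ∀ i : Fin n, φ (X i) =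
      if h1 : (i : ℕ) < k then y ⟨i, h1⟩
      else if h2 : (i : ℕ) < 2 * k then -y ⟨(i : ℕ) - k, by omega⟩
      else 0) (m : ℕ) :
    φ (esymm (Fin n) R m) =
      if 2 ∣ m then (-1) ^ (m / 2) * aeval (fun i => y i ^ 2) (esymm (Fin k) R (m / 2))
      else 0 := by
  rw [aeval_unique φ, aeval_esymm_eq_multiset_esymm,
    Fin.univ_val_map_eq_add_map_neg_add_replicate hk y (⇑φ ∘ X) hφ,
    Multiset.esymm_add_replicate_zero, Multiset.esymm_add_map_neg, aeval_esymm_eq_multiset_esymm,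
    Multiset.map_map]
  rfl

end MvPolynomial

/-- The image under the map `φ : ℚ[x₁,…,xₙ] → ℚ[y₁,…,y_k]` (with `k = ⌊n/2⌋`,
`φ(xᵢ) = yᵢ`, `φ(x_{k+i}) = -yᵢ`, and `φ(xₙ) = 0` when `n` is odd) of the
subalgebra of symmetric polynomials is exactly the subalgebra generated by the
elementary symmetric polynomials in the squares `y₁², …, y_k²`. -/
theorem image_symmetric_eq_adjoin_esymm_squares (n : ℕ)
    (φ : MvPolynomial (Fin n) ℚ →ₐ[ℚ] MvPolynomial (Fin (n / 2)) ℚ)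
    (hφ : ∀ i : Fin n, φ (X i) =
      if h1 : (i : ℕ) < n / 2 then X ⟨i, h1⟩
      else if h2 : (i : ℕ) < 2 * (n / 2) then
        -X ⟨(i : ℕ) - n / 2, by omega⟩
      else 0) :
    Subalgebra.map φ (symmetricSubalgebra (Fin n) ℚ) =
      Algebra.adjoin ℚ (Set.range fun j : Fin (n / 2) =>
        aeval (fun i : Fin (n / 2) => (X i : MvPolynomial (Fin (n / 2)) ℚ) ^ 2)
          (esymm (Fin (n / 2)) ℚ ((j : ℕ) + 1))) := by
  have hφ_esymm := apply_esymm_of_apply_X_eq_pm (Nat.mul_div_le n 2) X φ hφ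
  rw [symmetricSubalgebra_eq_adjoin_esymm (Fintype.card_fin n).le, AlgHom.map_adjoin,
    ← Set.range_comp]
  apply le_antisymm <;> rw [Algebra.adjoin_le_iff] <;> rintro _ ⟨i, rfl⟩
  · rw [Function.comp_apply, hφ_esymm]
    split_ifs with heven
    · refine mul_mem (pow_mem (neg_mem (one_mem _)) _)
        (Algebra.subset_adjoin ⟨⟨(i + 1) / 2 - 1, by omega⟩, ?_⟩)
      simp only
      congr
      omega
    · exact zero_mem _
  · have h := hφ_esymm (2 * (i + 1))
    rw [if_pos (dvd_mul_right 2 _), Nat.mul_div_cancel_left _ two_pos] at h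
    have hgen : aeval (fun j => X j ^ 2) (esymm (Fin (n / 2)) ℚ (i + 1)) =
        (-1) ^ ((i : ℕ) + 1) * φ (esymm (Fin n) ℚ (2 * (i + 1))) := by
      rw [h, ← mul_assoc, ← mul_pow, neg_one_mul, neg_neg, one_pow, one_mul]
    dsimp only
    rw [hgen]
    refine mul_mem (pow_mem (neg_mem (one_mem _)) _)
      (Algebra.subset_adjoin ⟨⟨2 * (i + 1) - 1, by omega⟩, ?_⟩)
    simp only [Function.comp_apply]
    congr
end

section
/- Let p, q ≥ 2 and work in R = ℚ[y₁,…,y_p, z₁,…,z_q]. Let I ⊆ R be the ideal generated by the elementary symmetric polynomials e₁,…,e_{p+q} of the full variable set {y₁,…,y_p, z₁,…,z_q}. If c, d ∈ ℚ are such that c·e₂(y₁,…,y_p) + d·(e₁(y₁,…,y_p))² belongs to I, then c = d = 0. -/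
open MvPolynomial

lemma aeval_CX_esymm {σ : Type*} [Fintype σ] (v : σ → ℚ) (k : ℕ) :
    MvPolynomial.aeval (fun w => Polynomial.C (v w) * Polynomial.X : σ → Polynomial ℚ)
        (esymm σ ℚ k)
      = Polynomial.C (MvPolynomial.eval v (esymm σ ℚ k)) * Polynomial.X ^ k := by
  rw [esymm, map_sum, map_sum, map_sum, Finset.sum_mul]
  refine Finset.sum_congr rfl fun t ht => ?_
  rw [Finset.mem_powersetCard] at ht
  rw [map_prod, map_prod, map_prod]
  simp only [MvPolynomial.aeval_X, MvPolynomial.eval_X]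
  rw [Finset.prod_mul_distrib, Finset.prod_const, ht.2]

lemma coeff_zero_aeval_CX {σ : Type*} [Fintype σ] (v : σ → ℚ) (f : MvPolynomial σ ℚ) :
    (MvPolynomial.aeval (fun w => Polynomial.C (v w) * Polynomial.X : σ → Polynomial ℚ)
        f).coeff 0
      = MvPolynomial.constantCoeff f := by
  have h1 : (Polynomial.aeval (0:ℚ)).comp
        (MvPolynomial.aeval (fun w => Polynomial.C (v w) * Polynomial.X : σ → Polynomial ℚ))
      = MvPolynomial.aeval (fun _ => (0:ℚ)) := by
    rw [MvPolynomial.comp_aeval]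
    congr 1
    funext w
    simp
  have h2 := congrArg (fun φ => φ f) h1
  simp only [AlgHom.coe_comp, Function.comp_apply] at h2
  rw [Polynomial.coeff_zero_eq_eval_zero, ← Polynomial.coe_aeval_eq_eval, h2,
    MvPolynomial.aeval_zero']
  simp

lemma eval_esymm_two {σ : Type*} [Fintype σ] [DecidableEq σ] (v : σ → ℚ) (i j : σ)
    (hij : i ≠ j) (hsupp : ∀ w, w ≠ i → w ≠ j → v w = 0) :
    MvPolynomial.eval v (esymm σ ℚ 2) = v i * v j := by
  rw [esymm, map_sum]
  rw [Finset.sum_eq_single ({i, j} : Finset σ)]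
  · rw [map_prod]; simp only [MvPolynomial.eval_X]
    rw [Finset.prod_pair hij]
  · intro t ht hne
    rw [Finset.mem_powersetCard] at ht
    have : ¬ t ⊆ ({i, j} : Finset σ) := by
      intro hsub
      exact hne (Finset.eq_of_subset_of_card_le hsub (by rw [ht.2, Finset.card_pair hij]))
    obtain ⟨w, hwt, hw⟩ := Finset.not_subset.mp this
    rw [map_prod]
    refine Finset.prod_eq_zero hwt ?_
    simp only [Finset.mem_insert, Finset.mem_singleton, not_or] at hw
    simp [MvPolynomial.eval_X, hsupp w hw.1 hw.2]
  · intro habs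
    exact absurd (Finset.mem_powersetCard.mpr ⟨Finset.subset_univ _, Finset.card_pair hij⟩) habs

lemma eval_esymm_one' {σ : Type*} [Fintype σ] (v : σ → ℚ) :
    MvPolynomial.eval v (esymm σ ℚ 1) = ∑ w, v w := by
  simp [esymm_one]

lemma sum_two_pt {σ : Type*} [Fintype σ] [DecidableEq σ] (i j : σ) (hij : i ≠ j) (x y : ℚ) :
    ∑ w, (if w = i then x else if w = j then y else 0) = x + y := by
  have : ∀ w, (if w = i then x else if w = j then y else 0)
      = (if w = i then x else 0) + (if w = j then y else 0) := by
    intro w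
    by_cases h1 : w = i
    · subst h1; simp [Ne.symm, hij]
    · simp [h1]
  simp only [this, Finset.sum_add_distrib, Finset.sum_ite_eq' Finset.univ, Finset.mem_univ,
    if_true]

/-- In `ℚ[y₁,…,y_p,z₁,…,z_q]` (`p,q ≥ 2`), if a linear combination
`c·e₂(y) + d·e₁(y)²` lies in the ideal generated by the elementary symmetric
polynomials `e₁,…,e_{p+q}` of all the variables, then `c = d = 0`. -/
theorem esymm_two_one_sq_linear_independent_mod_span (p q : ℕ) (hp : 2 ≤ p) (hq : 2 ≤ q)
    (c d : ℚ)
    (h : C c * rename (Sum.inl : Fin p → Fin p ⊕ Fin q) (esymm (Fin p) ℚ 2)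
        + C d * (rename (Sum.inl : Fin p → Fin p ⊕ Fin q) (esymm (Fin p) ℚ 1)) ^ 2
      ∈ Ideal.span (Set.range fun j : Fin (p + q) =>
          esymm (Fin p ⊕ Fin q) ℚ ((j : ℕ) + 1))) :
    c = 0 ∧ d = 0 := by
  rw [Ideal.mem_span_range_iff_exists_fun] at h
  obtain ⟨g, hg⟩ := h
  have hn : 1 < p + q := by omega
  set a : ℚ := MvPolynomial.constantCoeff (g ⟨1, hn⟩) with ha
  have key : ∀ v : Fin p ⊕ Fin q → ℚ, (∑ w, v w) = 0 →
      c * MvPolynomial.eval (v ∘ Sum.inl) (esymm (Fin p) ℚ 2)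
        + d * (MvPolynomial.eval (v ∘ Sum.inl) (esymm (Fin p) ℚ 1))^2
      = a * MvPolynomial.eval v (esymm (Fin p ⊕ Fin q) ℚ 2) := by
    intro v hv
    set φ := MvPolynomial.aeval (R := ℚ)
      (fun w => Polynomial.C (v w) * Polynomial.X : (Fin p ⊕ Fin q) → Polynomial ℚ) with hφ
    have this1 := congrArg (fun F => (φ F).coeff 2) hg
    simp only [map_sum, map_add, map_mul, map_pow] at this1
    rw [Polynomial.finset_sum_coeff] at this1
    have hren2 : φ (rename (Sum.inl : Fin p → Fin p ⊕ Fin q) (esymm (Fin p) ℚ 2))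
        = Polynomial.C (MvPolynomial.eval (v ∘ Sum.inl) (esymm (Fin p) ℚ 2))
            * Polynomial.X ^ 2 := by
      rw [hφ, aeval_rename]
      exact aeval_CX_esymm (v ∘ Sum.inl) 2
    have hren1 : φ (rename (Sum.inl : Fin p → Fin p ⊕ Fin q) (esymm (Fin p) ℚ 1))
        = Polynomial.C (MvPolynomial.eval (v ∘ Sum.inl) (esymm (Fin p) ℚ 1))
            * Polynomial.X ^ 1 := by
      rw [hφ, aeval_rename]
      exact aeval_CX_esymm (v ∘ Sum.inl) 1
    have hCc : ∀ r : ℚ, φ (MvPolynomial.C r) = Polynomial.C r := by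
      intro r; rw [hφ]; simp [MvPolynomial.aeval_C]
    have hfull : ∀ k, φ (esymm (Fin p ⊕ Fin q) ℚ k)
        = Polynomial.C (MvPolynomial.eval v (esymm (Fin p ⊕ Fin q) ℚ k))
            * Polynomial.X ^ k := fun k => aeval_CX_esymm v k
    rw [hren2, hren1, hCc, hCc] at this1
    simp only [hfull] at this1
    -- RHS coefficient
    have hRHS : (Polynomial.C c
          * (Polynomial.C (MvPolynomial.eval (v ∘ Sum.inl) (esymm (Fin p) ℚ 2))
              * Polynomial.X ^ 2)
        + Polynomial.C d
          * (Polynomial.C (MvPolynomial.eval (v ∘ Sum.inl) (esymm (Fin p) ℚ 1))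
              * Polynomial.X ^ 1) ^ 2).coeff 2
        = c * MvPolynomial.eval (v ∘ Sum.inl) (esymm (Fin p) ℚ 2)
          + d * (MvPolynomial.eval (v ∘ Sum.inl) (esymm (Fin p) ℚ 1)) ^ 2 := by
      have hXC : ∀ A B : ℚ, Polynomial.C c * (Polynomial.C A * Polynomial.X ^ 2)
          + Polynomial.C d * (Polynomial.C B * Polynomial.X ^ 1) ^ 2
          = Polynomial.C (c * A + d * B ^ 2) * Polynomial.X ^ 2 := by
        intro A B
        simp only [Polynomial.C_add, Polynomial.C_mul, Polynomial.C_pow]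
        ring
      rw [hXC, Polynomial.coeff_C_mul, Polynomial.coeff_X_pow, if_pos rfl, mul_one]
    -- LHS sum
    have hLHS : ∑ i : Fin (p + q),
        (φ (g i) * (Polynomial.C (MvPolynomial.eval v
            (esymm (Fin p ⊕ Fin q) ℚ ((i : ℕ) + 1))) * Polynomial.X ^ ((i : ℕ) + 1))).coeff 2
        = a * MvPolynomial.eval v (esymm (Fin p ⊕ Fin q) ℚ 2) := by
      rw [Finset.sum_eq_single (⟨1, hn⟩ : Fin (p + q))]
      · have hv1 : ((⟨1, hn⟩ : Fin (p + q)) : ℕ) = 1 := rfl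
        rw [hv1]
        rw [← mul_assoc, Polynomial.coeff_mul_X_pow', if_pos (by norm_num)]
        have h20 : (2 - (1 + 1) : ℕ) = 0 := rfl
        rw [h20, Polynomial.coeff_mul_C, hφ, coeff_zero_aeval_CX, ← ha]
      · intro j _ hne
        have hj1 : (j : ℕ) ≠ 1 := by
          intro hcx; exact hne (Fin.ext hcx)
        rcases Nat.lt_or_ge (j : ℕ) 1 with hlt | hge
        · have h0 : (j : ℕ) = 0 := by omega
          rw [h0]
          have he0 : MvPolynomial.eval v (esymm (Fin p ⊕ Fin q) ℚ (0 + 1)) = 0 := by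
            rw [show (0 + 1 : ℕ) = 1 from rfl, eval_esymm_one']
            exact hv
          rw [he0]
          simp
        · have h2 : ¬ ((j : ℕ) + 1 ≤ 2) := by omega
          rw [← mul_assoc, Polynomial.coeff_mul_X_pow', if_neg h2]
      · intro habs
        exact absurd (Finset.mem_univ _) habs
    rw [hRHS, hLHS] at this1
    exact this1.symm
  -- Now instantiate at three points
  have h0p : 0 < p := by omega
  have h1p : 1 < p := by omega
  have h0q : 0 < q := by omega
  have h1q : 1 < q := by omega
  have hyne : (⟨0, h0p⟩ : Fin p) ≠ ⟨1, h1p⟩ := by simp [Fin.ext_iff]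
  have hzne : (⟨0, h0q⟩ : Fin q) ≠ ⟨1, h1q⟩ := by simp [Fin.ext_iff]
  -- Instantiation 1 : y₁ = 1, y₂ = -1, rest 0
  have k1 := key (fun w => if w = Sum.inl (⟨0, h0p⟩ : Fin p) then (1:ℚ)
      else if w = Sum.inl (⟨1, h1p⟩ : Fin p) then -1 else 0)
    (by rw [sum_two_pt _ _ (by simp [Fin.ext_iff])]; norm_num)
  rw [eval_esymm_two _ (Sum.inl ⟨0, h0p⟩) (Sum.inl ⟨1, h1p⟩) (by simp [Fin.ext_iff])
        (by intro w hw0 hw1; simp [hw0, hw1]),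
      eval_esymm_two _ (⟨0, h0p⟩ : Fin p) ⟨1, h1p⟩ hyne
        (by intro w hw0 hw1; simp [Function.comp, hw0, hw1]),
      eval_esymm_one'] at k1
  have hsum1 : ∑ i : Fin p, ((fun w : Fin p ⊕ Fin q => if w = Sum.inl (⟨0, h0p⟩ : Fin p) then (1:ℚ)
      else if w = Sum.inl (⟨1, h1p⟩ : Fin p) then -1 else 0) ∘ Sum.inl) i = 0 := by
    have hco : ((fun w : Fin p ⊕ Fin q => if w = Sum.inl (⟨0, h0p⟩ : Fin p) then (1:ℚ)
        else if w = Sum.inl (⟨1, h1p⟩ : Fin p) then -1 else 0) ∘ Sum.inl)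
        = fun i : Fin p => if i = ⟨0, h0p⟩ then (1:ℚ) else if i = ⟨1, h1p⟩ then -1 else 0 := by
      funext i; simp [Function.comp]
    rw [hco, sum_two_pt _ _ hyne]; norm_num
  rw [hsum1] at k1
  simp only [Function.comp_apply] at k1
  norm_num [Fin.ext_iff] at k1
  -- k1 : c * (1 * -1) + d * 0 ^ 2 = a * (1 * -1)
  -- Instantiation 2 : z₁ = 1, z₂ = -1, rest 0
  have k2 := key (fun w => if w = Sum.inr (⟨0, h0q⟩ : Fin q) then (1:ℚ)
      else if w = Sum.inr (⟨1, h1q⟩ : Fin q) then -1 else 0)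
    (by rw [sum_two_pt _ _ (by simp [Fin.ext_iff])]; norm_num)
  rw [eval_esymm_two _ (Sum.inr ⟨0, h0q⟩) (Sum.inr ⟨1, h1q⟩) (by simp [Fin.ext_iff])
        (by intro w hw0 hw1; simp [hw0, hw1]),
      eval_esymm_two _ (⟨0, h0p⟩ : Fin p) ⟨1, h1p⟩ hyne
        (by intro w _ _; simp [Function.comp]),
      eval_esymm_one'] at k2
  have hsum2 : ∑ i : Fin p, ((fun w : Fin p ⊕ Fin q => if w = Sum.inr (⟨0, h0q⟩ : Fin q) then (1:ℚ)
      else if w = Sum.inr (⟨1, h1q⟩ : Fin q) then -1 else 0) ∘ Sum.inl) i = 0 := by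
    simp [Function.comp]
  rw [hsum2] at k2
  simp only [Function.comp_apply] at k2
  simp only [reduceCtorEq, if_false] at k2
  norm_num at k2
  -- Instantiation 3 : y₁ = 1, z₁ = -1, rest 0
  have k3 := key (fun w => if w = Sum.inl (⟨0, h0p⟩ : Fin p) then (1:ℚ)
      else if w = Sum.inr (⟨0, h0q⟩ : Fin q) then -1 else 0)
    (by rw [sum_two_pt _ _ (by simp)]; norm_num)
  rw [eval_esymm_two _ (Sum.inl ⟨0, h0p⟩) (Sum.inr ⟨0, h0q⟩) (by simp)
        (by intro w hw0 hw1; simp [hw0, hw1]),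
      eval_esymm_two _ (⟨0, h0p⟩ : Fin p) ⟨1, h1p⟩ hyne
        (by intro w hw0 _; simp [Function.comp, hw0]),
      eval_esymm_one'] at k3
  have hsum3 : ∑ i : Fin p, ((fun w : Fin p ⊕ Fin q => if w = Sum.inl (⟨0, h0p⟩ : Fin p) then (1:ℚ)
      else if w = Sum.inr (⟨0, h0q⟩ : Fin q) then -1 else 0) ∘ Sum.inl) i = 1 := by
    have hco : ((fun w : Fin p ⊕ Fin q => if w = Sum.inl (⟨0, h0p⟩ : Fin p) then (1:ℚ)
        else if w = Sum.inr (⟨0, h0q⟩ : Fin q) then -1 else 0) ∘ Sum.inl)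
        = fun i : Fin p => if i = ⟨0, h0p⟩ then (1:ℚ) else if i = ⟨1, h1p⟩ then 0 else 0 := by
      funext i; by_cases hi : i = ⟨0, h0p⟩ <;> simp [Function.comp, hi]
    rw [hco, sum_two_pt _ _ hyne]; norm_num
  rw [hsum3] at k3
  simp only [Function.comp_apply] at k3
  simp only [reduceCtorEq, if_false] at k3
  norm_num at k3
  -- conclude
  constructor <;> linarith [k1, k2, k3]
end

section
/- Let n ≥ 2 and work in ℚ[y₁,…,y_n]. Let I be the ideal generated by the elementary symmetric polynomials e₁(y₁²,…,y_n²),…,e_n(y₁²,…,y_n²) of the squares of the variables. Then (y₁+⋯+y_n)² does not belong to I. -/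
open MvPolynomial

set_option maxHeartbeats 1000000
set_option synthInstance.maxHeartbeats 400000

private lemma eps_add_inl_eps_sq_ne_zero :
    ((DualNumber.eps + TrivSqZeroExt.inl DualNumber.eps :
      DualNumber (DualNumber ℚ)))^2 ≠ 0 := by
  intro h
  have := congrArg (fun x => TrivSqZeroExt.snd (TrivSqZeroExt.snd x)) h
  simp only [pow_two, TrivSqZeroExt.snd_mul, TrivSqZeroExt.fst_add, TrivSqZeroExt.snd_add,
    DualNumber.fst_eps, DualNumber.snd_eps, TrivSqZeroExt.fst_inl, TrivSqZeroExt.snd_inl,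
    TrivSqZeroExt.snd_zero, smul_eq_mul, TrivSqZeroExt.fst_zero, op_smul_eq_mul] at this
  norm_num at this

/-- In `ℚ[y₁,…,yₙ]` (`n ≥ 2`), the polynomial `(y₁+⋯+yₙ)²` does not belong to
the ideal generated by the elementary symmetric polynomials
`e₁(y₁²,…,yₙ²),…,eₙ(y₁²,…,yₙ²)` of the squares of the variables. -/
theorem sum_sq_not_mem_span_esymm_squares (n : ℕ) (hn : 2 ≤ n) :
    (∑ i : Fin n, X i : MvPolynomial (Fin n) ℚ) ^ 2
      ∉ Ideal.span (Set.range fun j : Fin n =>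
          aeval (fun i : Fin n => (X i : MvPolynomial (Fin n) ℚ) ^ 2)
            (esymm (Fin n) ℚ ((j : ℕ) + 1))) := by
  intro hmem
  obtain ⟨m, rfl⟩ : ∃ m, n = m + 2 := ⟨n - 2, by omega⟩
  set u : Fin (m + 2) → DualNumber (DualNumber ℚ) := fun i =>
    (if i = 0 then DualNumber.eps else 0) +
      (if i = 1 then TrivSqZeroExt.inl DualNumber.eps else 0) with hu
  have hu2 : ∀ i, u i ^ 2 = 0 := by
    intro i
    simp only [hu]
    split_ifs with h0 h1
    · exact absurd (h0 ▸ h1 : (0 : Fin (m + 2)) = 1) (by exact Fin.zero_ne_one)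
    · simp [pow_two, DualNumber.eps_mul_eps]
    · rw [zero_add, pow_two, ← TrivSqZeroExt.inl_mul]
      simp
    · simp
  -- every generator is killed by `aeval u`
  have hgen : ∀ j : Fin (m + 2),
      aeval u (aeval (fun i : Fin (m+2) => (X i : MvPolynomial (Fin (m+2)) ℚ) ^ 2)
        (esymm (Fin (m+2)) ℚ ((j : ℕ) + 1))) = 0 := by
    intro j
    rw [comp_aeval_apply (φ := (aeval u : MvPolynomial (Fin (m+2)) ℚ →ₐ[ℚ] DualNumber (DualNumber ℚ)))]
    have hf : (fun i : Fin (m+2) => aeval u ((X i : MvPolynomial (Fin (m+2)) ℚ) ^ 2))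
        = fun _ => (0 : DualNumber (DualNumber ℚ)) := by
      funext i
      rw [map_pow, aeval_X, hu2]
    rw [hf, esymm, map_sum]
    refine Finset.sum_eq_zero fun S hS => ?_
    rw [Finset.mem_powersetCard] at hS
    obtain ⟨i, hi⟩ : S.Nonempty := Finset.card_pos.mp (by omega)
    simp only [map_prod, aeval_X]
    rw [Finset.prod_const, zero_pow (by omega : S.card ≠ 0)]
  have hker : Ideal.span (Set.range fun j : Fin (m+2) =>
      aeval (fun i : Fin (m+2) => (X i : MvPolynomial (Fin (m+2)) ℚ) ^ 2)
        (esymm (Fin (m+2)) ℚ ((j : ℕ) + 1)))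
      ≤ RingHom.ker (aeval u : MvPolynomial (Fin (m+2)) ℚ →ₐ[ℚ] DualNumber (DualNumber ℚ)).toRingHom := by
    rw [Ideal.span_le]
    rintro _ ⟨j, rfl⟩
    exact hgen j
  have h0 : aeval u ((∑ i : Fin (m+2), X i : MvPolynomial (Fin (m+2)) ℚ) ^ 2) = 0 :=
    hker hmem
  rw [map_pow, map_sum] at h0
  simp only [aeval_X, hu, Finset.sum_add_distrib, Finset.sum_ite_eq', Finset.mem_univ,
    if_true] at h0
  exact eps_add_inl_eps_sq_ne_zero h0
end

section
/- Let a, b ≥ 1 and work in ℚ[y₁,…,y_a, z₁,…,z_b]. Let I be the ideal generated by the elementary symmetric polynomials e₁,…,e_{a+b} evaluated at the a+b squares y₁²,…,y_a², z₁²,…,z_b². Then for scalars c, d ∈ ℚ, the polynomial c·(y₁²+⋯+y_a²) + d·(z₁²+⋯+z_b²) belongs to I if and only if c = d. -/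
open MvPolynomial

/-- In `ℚ[y₁,…,y_a,z₁,…,z_b]` (`a,b ≥ 1`), the polynomial
`c·(y₁²+⋯+y_a²) + d·(z₁²+⋯+z_b²)` lies in the ideal generated by the elementary
symmetric polynomials `e₁,…,e_{a+b}` of the squares of all the variables if and
only if `c = d`. -/
theorem comb_sum_squares_mem_span_iff (a b : ℕ) (ha : 1 ≤ a) (hb : 1 ≤ b) (c d : ℚ) :
    (C c * (∑ i : Fin a, (X (Sum.inl i) : MvPolynomial (Fin a ⊕ Fin b) ℚ) ^ 2)
      + C d * (∑ j : Fin b, (X (Sum.inr j) : MvPolynomial (Fin a ⊕ Fin b) ℚ) ^ 2)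
      ∈ Ideal.span (Set.range fun k : Fin (a + b) =>
          aeval (fun i : Fin a ⊕ Fin b => (X i : MvPolynomial (Fin a ⊕ Fin b) ℚ) ^ 2)
            (esymm (Fin a ⊕ Fin b) ℚ ((k : ℕ) + 1))))
    ↔ c = d := by
  constructor
  · intro hmem
    -- substitution targets
    set β : ℂ := Complex.I * (Real.sqrt (a * b) : ℝ) with hβdef
    have hβ : β ^ 2 = -((a : ℂ) * b) := by
      rw [hβdef, mul_pow, Complex.I_sq, ← Complex.ofReal_pow,
        Real.sq_sqrt (by positivity)]
      push_cast; ring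
    set g : Fin a ⊕ Fin b → Polynomial ℂ :=
      Sum.elim (fun _ => Polynomial.C (b : ℂ) * Polynomial.X)
               (fun _ => Polynomial.C β * Polynomial.X) with hgdef
    set γ : Fin a ⊕ Fin b → ℂ :=
      Sum.elim (fun _ => (b : ℂ) ^ 2) (fun _ => -((a : ℂ) * b)) with hγdef
    have hg2 : ∀ i, g i ^ 2 = Polynomial.C (γ i) * Polynomial.X ^ 2 := by
      rintro (i | j) <;>
        simp [hgdef, hγdef, mul_pow, ← Polynomial.C_pow, hβ]
    have hγsum : ∑ i, γ i = 0 := by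
      rw [Fintype.sum_sum_type]
      simp only [hγdef, Sum.elim_inl, Sum.elim_inr, Finset.sum_const,
        Finset.card_univ, Fintype.card_fin, nsmul_eq_mul]
      ring
    have hcomp : ∀ q : MvPolynomial (Fin a ⊕ Fin b) ℚ,
        aeval g (aeval (fun i : Fin a ⊕ Fin b =>
            (X i : MvPolynomial (Fin a ⊕ Fin b) ℚ) ^ 2) q)
          = aeval (fun i => Polynomial.C (γ i) * Polynomial.X ^ 2) q := by
      intro q
      rw [← AlgHom.comp_apply, MvPolynomial.comp_aeval]
      simp only [map_pow, aeval_X, hg2]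
    have hgen : ∀ k : Fin (a + b), (Polynomial.X : Polynomial ℂ) ^ 3 ∣
        aeval g (aeval (fun i : Fin a ⊕ Fin b =>
            (X i : MvPolynomial (Fin a ⊕ Fin b) ℚ) ^ 2)
          (esymm (Fin a ⊕ Fin b) ℚ ((k : ℕ) + 1))) := by
      intro k
      rw [hcomp]
      rcases Nat.eq_zero_or_pos (k : ℕ) with hk | hk
      · rw [hk, esymm_one, map_sum]
        simp only [aeval_X]
        rw [← Finset.sum_mul, ← map_sum Polynomial.C, hγsum, map_zero, zero_mul]
        exact dvd_zero _
      · rw [esymm, map_sum]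
        apply Finset.dvd_sum
        intro t ht
        rw [map_prod]
        simp only [aeval_X]
        rw [Finset.prod_mul_distrib, Finset.prod_const,
          (Finset.mem_powersetCard.mp ht).2, ← pow_mul]
        exact Dvd.dvd.mul_left (pow_dvd_pow _ (by omega)) _
    -- push the membership through `aeval g`
    have himg : aeval g (C c * (∑ i : Fin a,
          (X (Sum.inl i) : MvPolynomial (Fin a ⊕ Fin b) ℚ) ^ 2)
        + C d * (∑ j : Fin b,
          (X (Sum.inr j) : MvPolynomial (Fin a ⊕ Fin b) ℚ) ^ 2))
        ∈ Ideal.span {(Polynomial.X : Polynomial ℂ) ^ 3} := by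
      have h1 := Ideal.mem_map_of_mem (aeval g).toRingHom hmem
      rw [Ideal.map_span] at h1
      refine Ideal.span_le.mpr ?_ h1
      rintro _ ⟨_, ⟨k, rfl⟩, rfl⟩
      rw [SetLike.mem_coe, Ideal.mem_span_singleton]
      exact hgen k
    have himgval : aeval g (C c * (∑ i : Fin a,
          (X (Sum.inl i) : MvPolynomial (Fin a ⊕ Fin b) ℚ) ^ 2)
        + C d * (∑ j : Fin b,
          (X (Sum.inr j) : MvPolynomial (Fin a ⊕ Fin b) ℚ) ^ 2))
        = Polynomial.C ((c : ℂ) * a * b ^ 2 - (d : ℂ) * a * b ^ 2)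
            * Polynomial.X ^ 2 := by
      simp only [map_add, map_mul, map_sum, map_pow, aeval_X, aeval_C]
      simp only [hgdef, Sum.elim_inl, Sum.elim_inr, mul_pow, ← Polynomial.C_pow,
        hβ, Finset.sum_const, Finset.card_univ, Fintype.card_fin, nsmul_eq_mul]
      have hc : algebraMap ℚ (Polynomial ℂ) c = Polynomial.C (c : ℂ) := by
        simp [Polynomial.algebraMap_apply]
      have hd : algebraMap ℚ (Polynomial ℂ) d = Polynomial.C (d : ℂ) := by
        simp [Polynomial.algebraMap_apply]
      rw [hc, hd]
      simp only [map_mul, map_sub, map_neg, map_pow, Polynomial.C_eq_natCast]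
      ring
    rw [himgval, Ideal.mem_span_singleton, Polynomial.X_pow_dvd_iff] at himg
    have h2 := himg 2 (by norm_num)
    rw [Polynomial.coeff_C_mul, Polynomial.coeff_X_pow] at h2
    norm_num at h2
    have ha' : (a : ℂ) ≠ 0 := Nat.cast_ne_zero.mpr (by omega)
    have hb' : (b : ℂ) ≠ 0 := Nat.cast_ne_zero.mpr (by omega)
    have hcd : (c : ℂ) = (d : ℂ) := by
      have h3 : ((c : ℂ) - d) * (a * b ^ 2) = 0 := by ring_nf; linear_combination h2
      rcases mul_eq_zero.mp h3 with h | h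
      · exact sub_eq_zero.mp h
      · exact absurd h (by simp [ha', hb'])
    exact_mod_cast hcd
  · rintro rfl
    have h0 : 0 < a + b := by omega
    have key : C c * (∑ i : Fin a,
          (X (Sum.inl i) : MvPolynomial (Fin a ⊕ Fin b) ℚ) ^ 2)
        + C c * (∑ j : Fin b,
          (X (Sum.inr j) : MvPolynomial (Fin a ⊕ Fin b) ℚ) ^ 2)
        = C c * aeval (fun i : Fin a ⊕ Fin b =>
            (X i : MvPolynomial (Fin a ⊕ Fin b) ℚ) ^ 2)
            (esymm (Fin a ⊕ Fin b) ℚ (((⟨0, h0⟩ : Fin (a + b)) : ℕ) + 1)) := by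
      simp only [Fin.val_mk, zero_add, esymm_one, map_add, map_sum, map_pow, aeval_X,
        Fintype.sum_sum_type, mul_add]
    rw [key]
    exact Ideal.mul_mem_left _ _ (Ideal.subset_span ⟨⟨0, h0⟩, rfl⟩)
end

section
/- Let a ≥ 2 and work in ℚ[y₁,…,y_a, z₁,…,z_a]. Let I be the ideal generated by the elementary symmetric polynomials e₁,…,e_{2a} evaluated at the 2a squares y₁²,…,y_a², z₁²,…,z_a², together with the monomial y₁⋯y_a·z₁⋯z_a. If c, d ∈ ℚ are such that c·e₂(y₁²,…,y_a²) + d·(e₁(y₁²,…,y_a²))² belongs to I, then c = d = 0. -/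
open MvPolynomial

namespace EsymmAux

open Finset

/-- A primitive cube root of unity in `ℂ`. -/
noncomputable def ω : ℂ := (-1 + (Real.sqrt 3 : ℂ) * Complex.I) / 2

lemma homega : ω ^ 2 + ω + 1 = 0 := by
  have hs : ((Real.sqrt 3 : ℝ) : ℂ) ^ 2 = 3 := by
    norm_cast
    rw [Real.sq_sqrt] <;> norm_num
  unfold ω
  linear_combination (Complex.I ^ 2 / 4) * hs + (3 / 4) * Complex.I_sq

lemma omega_ne : ω ≠ 0 := fun h => by simpa [h] using homega

section Sums

variable {σ : Type*} [Fintype σ] [DecidableEq σ] (u : σ → ℂ)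

lemma SP_insert {x : σ} {s : Finset σ} (hx : x ∉ s) (n : ℕ) :
    ∑ t ∈ powersetCard (n + 1) (insert x s), ∏ i ∈ t, u i
      = (∑ t ∈ powersetCard (n + 1) s, ∏ i ∈ t, u i)
        + u x * ∑ t ∈ powersetCard n s, ∏ i ∈ t, u i := by
  rw [Finset.powersetCard_succ_insert hx]
  rw [Finset.sum_union ?disj]
  case disj =>
    rw [Finset.disjoint_left]
    rintro t ht hti
    obtain ⟨t', _ht', rfl⟩ := Finset.mem_image.mp hti
    exact hx ((Finset.mem_powersetCard.mp ht).1 (Finset.mem_insert_self x t'))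
  congr 1
  rw [Finset.sum_image ?inj, Finset.mul_sum]
  case inj =>
    intro t1 h1 t2 h2 he
    have k1 : x ∉ t1 := fun hxx => hx ((Finset.mem_powersetCard.mp h1).1 hxx)
    have k2 : x ∉ t2 := fun hxx => hx ((Finset.mem_powersetCard.mp h2).1 hxx)
    rw [← Finset.erase_insert k1, ← Finset.erase_insert k2, he]
  refine Finset.sum_congr rfl fun t ht => ?_
  rw [Finset.prod_insert fun hxx => hx ((Finset.mem_powersetCard.mp ht).1 hxx)]

lemma SP_zero (s : Finset σ) : ∑ t ∈ powersetCard 0 s, ∏ i ∈ t, u i = 1 := by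
  rw [Finset.powersetCard_zero, Finset.sum_singleton, Finset.prod_empty]

lemma E1_single (k : σ) :
    ∑ t ∈ powersetCard 1 ({k} : Finset σ), ∏ i ∈ t, u i = u k := by
  rw [← Finset.card_singleton k, Finset.powersetCard_self, Finset.sum_singleton,
    Finset.prod_singleton]

lemma E2_single (k : σ) :
    ∑ t ∈ powersetCard 2 ({k} : Finset σ), ∏ i ∈ t, u i = 0 := by
  rw [Finset.powersetCard_eq_empty.mpr (by simp), Finset.sum_empty]

lemma E1_pair {j k : σ} (hjk : j ∉ ({k} : Finset σ)) :
    ∑ t ∈ powersetCard 1 ({j, k} : Finset σ), ∏ i ∈ t, u i = u j + u k := by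
  have h := SP_insert u hjk 0
  simp only [zero_add] at h
  rw [E1_single, SP_zero] at h
  rw [h]; ring

lemma E2_pair {j k : σ} (hjk : j ∉ ({k} : Finset σ)) :
    ∑ t ∈ powersetCard 2 ({j, k} : Finset σ), ∏ i ∈ t, u i = u j * u k := by
  have h := SP_insert u hjk 1
  simp only [Nat.reduceAdd] at h
  rw [E2_single, E1_single] at h
  rw [h]; ring

lemma E1_triple {i j k : σ} (hi : i ∉ ({j, k} : Finset σ)) (hjk : j ∉ ({k} : Finset σ)) :
    ∑ t ∈ powersetCard 1 ({i, j, k} : Finset σ), ∏ x ∈ t, u x = u i + u j + u k := by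
  have h := SP_insert u hi 0
  simp only [zero_add] at h
  rw [E1_pair u hjk, SP_zero] at h
  rw [h]; ring

lemma E2_triple {i j k : σ} (hi : i ∉ ({j, k} : Finset σ)) (hjk : j ∉ ({k} : Finset σ)) :
    ∑ t ∈ powersetCard 2 ({i, j, k} : Finset σ), ∏ x ∈ t, u x
      = u i * u j + u i * u k + u j * u k := by
  have h := SP_insert u hi 1
  simp only [Nat.reduceAdd] at h
  rw [E2_pair u hjk, E1_pair u hjk] at h
  rw [h]; ring

lemma sparse (s : Finset σ) (h : ∀ i ∉ s, u i = 0) (n : ℕ) :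
    ∑ t ∈ powersetCard n (univ : Finset σ), ∏ i ∈ t, u i
      = ∑ t ∈ powersetCard n s, ∏ i ∈ t, u i := by
  symm
  refine Finset.sum_subset (Finset.powersetCard_mono (Finset.subset_univ s)) ?_
  intro t ht hts
  have hns : ¬t ⊆ s := fun hsub =>
    hts (Finset.mem_powersetCard.mpr ⟨hsub, (Finset.mem_powersetCard.mp ht).2⟩)
  obtain ⟨x, hxt, hxs⟩ := Finset.not_subset.mp hns
  exact Finset.prod_eq_zero hxt (h x hxs)

lemma key_aeval (g : σ → ℂ) (n : ℕ) :
    aeval (fun i => (Polynomial.C (g i) * Polynomial.X) ^ 2) (esymm σ ℚ n)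
      = Polynomial.C (∑ t ∈ powersetCard n (univ : Finset σ), ∏ i ∈ t, g i ^ 2)
          * Polynomial.X ^ (2 * n) := by
  have hrhs : (Polynomial.C (∑ t ∈ powersetCard n (univ : Finset σ), ∏ i ∈ t, g i ^ 2)
        * Polynomial.X ^ (2 * n) : Polynomial ℂ)
      = ∑ t ∈ powersetCard n (univ : Finset σ),
          Polynomial.C (∏ i ∈ t, g i ^ 2) * Polynomial.X ^ (2 * n) := by
    rw [map_sum, Finset.sum_mul]
  rw [hrhs, esymm, map_sum]
  refine Finset.sum_congr rfl fun t ht => ?_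
  rw [map_prod]
  simp only [aeval_X]
  have hcard := (Finset.mem_powersetCard.mp ht).2
  calc ∏ i ∈ t, (Polynomial.C (g i) * Polynomial.X) ^ 2
      = ∏ i ∈ t, Polynomial.C (g i ^ 2) * Polynomial.X ^ 2 := by
        refine Finset.prod_congr rfl fun i _ => ?_
        rw [map_pow]; ring
    _ = Polynomial.C (∏ i ∈ t, g i ^ 2) * (Polynomial.X ^ 2) ^ t.card := by
        rw [Finset.prod_mul_distrib, ← map_prod, Finset.prod_const]
    _ = _ := by rw [hcard, ← pow_mul]

end Sums

/-- Transport the ideal membership through the evaluation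
`yᵢ, zᵢ ↦ γ(i)·X` into `ℂ[X]`. -/
lemma transport (a : ℕ) (c d : ℚ) (γ : Fin a ⊕ Fin a → ℂ)
    (hm : (∏ x : Fin a, γ (Sum.inl x)) * ∏ x : Fin a, γ (Sum.inr x) = 0)
    (h1 : ∑ t ∈ powersetCard 1 (univ : Finset (Fin a ⊕ Fin a)), ∏ x ∈ t, γ x ^ 2 = 0)
    (h2 : ∑ t ∈ powersetCard 2 (univ : Finset (Fin a ⊕ Fin a)), ∏ x ∈ t, γ x ^ 2 = 0)
    (h : C c * aeval (fun i : Fin a => (X (Sum.inl i) : MvPolynomial (Fin a ⊕ Fin a) ℚ) ^ 2)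
            (esymm (Fin a) ℚ 2)
        + C d * (aeval (fun i : Fin a => (X (Sum.inl i) : MvPolynomial (Fin a ⊕ Fin a) ℚ) ^ 2)
            (esymm (Fin a) ℚ 1)) ^ 2
      ∈ Ideal.span
          ((Set.range fun k : Fin (a + a) =>
              aeval (fun i : Fin a ⊕ Fin a => (X i : MvPolynomial (Fin a ⊕ Fin a) ℚ) ^ 2)
                (esymm (Fin a ⊕ Fin a) ℚ ((k : ℕ) + 1)))
            ∪ {(∏ i : Fin a, (X (Sum.inl i) : MvPolynomial (Fin a ⊕ Fin a) ℚ))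
                * ∏ i : Fin a, (X (Sum.inr i) : MvPolynomial (Fin a ⊕ Fin a) ℚ)})) :
    (c : ℂ) * (∑ t ∈ powersetCard 2 (univ : Finset (Fin a)), ∏ x ∈ t, γ (Sum.inl x) ^ 2)
      + (d : ℂ) * (∑ t ∈ powersetCard 1 (univ : Finset (Fin a)), ∏ x ∈ t, γ (Sum.inl x) ^ 2) ^ 2
      = 0 := by
  classical
  set φ : MvPolynomial (Fin a ⊕ Fin a) ℚ →ₐ[ℚ] Polynomial ℂ :=
    aeval (fun x : Fin a ⊕ Fin a => Polynomial.C (γ x) * Polynomial.X) with hφdef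
  have hmem : φ (C c * aeval (fun i : Fin a =>
          (X (Sum.inl i) : MvPolynomial (Fin a ⊕ Fin a) ℚ) ^ 2) (esymm (Fin a) ℚ 2)
        + C d * (aeval (fun i : Fin a =>
          (X (Sum.inl i) : MvPolynomial (Fin a ⊕ Fin a) ℚ) ^ 2) (esymm (Fin a) ℚ 1)) ^ 2)
      ∈ Ideal.span {(Polynomial.X : Polynomial ℂ) ^ 6} := by
    have h' := Ideal.mem_map_of_mem φ h
    rw [Ideal.map_span] at h'
    refine Ideal.span_le.mpr ?_ h'
    rintro p ⟨q, hq, rfl⟩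
    rcases hq with ⟨k, rfl⟩ | hq
    · -- a symmetric-function generator
      show φ _ ∈ _
      rw [comp_aeval_apply]
      simp only [map_pow, hφdef, aeval_X]
      rw [key_aeval γ ((k : ℕ) + 1)]
      have hcase : (k : ℕ) = 0 ∨ (k : ℕ) = 1 ∨ 2 ≤ (k : ℕ) := by omega
      rcases hcase with hk | hk | hk
      · rw [hk]
        simp only [zero_add, Nat.reduceMul]
        rw [h1, map_zero, zero_mul]
        exact Ideal.zero_mem _
      · rw [hk]
        simp only [Nat.reduceAdd, Nat.reduceMul]
        rw [h2, map_zero, zero_mul]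
        exact Ideal.zero_mem _
      · refine Ideal.mem_span_singleton.mpr ?_
        exact (pow_dvd_pow _ (by omega : 6 ≤ 2 * ((k : ℕ) + 1))).trans (dvd_mul_left _ _)
    · -- the monomial generator
      rw [Set.mem_singleton_iff] at hq
      subst hq
      show φ _ ∈ _
      have hprod : ∀ v : Fin a → ℂ,
          (∏ x : Fin a, (Polynomial.C (v x) * Polynomial.X))
            = Polynomial.C (∏ x : Fin a, v x) * Polynomial.X ^ a := by
        intro v
        rw [Finset.prod_mul_distrib, ← map_prod, Finset.prod_const, Finset.card_univ,
          Fintype.card_fin]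
      rw [map_mul, map_prod, map_prod]
      simp only [hφdef, aeval_X]
      rw [hprod, hprod]
      have : (Polynomial.C (∏ x : Fin a, γ (Sum.inl x)) * Polynomial.X ^ a)
            * (Polynomial.C (∏ x : Fin a, γ (Sum.inr x)) * Polynomial.X ^ a)
          = Polynomial.C ((∏ x : Fin a, γ (Sum.inl x)) * ∏ x : Fin a, γ (Sum.inr x))
            * (Polynomial.X ^ a * Polynomial.X ^ a) := by
        rw [map_mul]; ring
      rw [this, hm, map_zero, zero_mul]
      exact Ideal.zero_mem _
  have hA : φ (aeval (fun i : Fin a =>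
        (X (Sum.inl i) : MvPolynomial (Fin a ⊕ Fin a) ℚ) ^ 2) (esymm (Fin a) ℚ 2))
      = Polynomial.C (∑ t ∈ powersetCard 2 (univ : Finset (Fin a)), ∏ x ∈ t, γ (Sum.inl x) ^ 2)
          * Polynomial.X ^ 4 := by
    rw [comp_aeval_apply]
    simp only [map_pow, hφdef, aeval_X]
    rw [key_aeval (fun i : Fin a => γ (Sum.inl i)) 2]
  have hB : φ (aeval (fun i : Fin a =>
        (X (Sum.inl i) : MvPolynomial (Fin a ⊕ Fin a) ℚ) ^ 2) (esymm (Fin a) ℚ 1))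
      = Polynomial.C (∑ t ∈ powersetCard 1 (univ : Finset (Fin a)), ∏ x ∈ t, γ (Sum.inl x) ^ 2)
          * Polynomial.X ^ 2 := by
    rw [comp_aeval_apply]
    simp only [map_pow, hφdef, aeval_X]
    rw [key_aeval (fun i : Fin a => γ (Sum.inl i)) 1]
  set E2 : ℂ := ∑ t ∈ powersetCard 2 (univ : Finset (Fin a)), ∏ x ∈ t, γ (Sum.inl x) ^ 2
    with hE2
  set E1 : ℂ := ∑ t ∈ powersetCard 1 (univ : Finset (Fin a)), ∏ x ∈ t, γ (Sum.inl x) ^ 2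
    with hE1
  have hval : φ (C c * aeval (fun i : Fin a =>
          (X (Sum.inl i) : MvPolynomial (Fin a ⊕ Fin a) ℚ) ^ 2) (esymm (Fin a) ℚ 2)
        + C d * (aeval (fun i : Fin a =>
          (X (Sum.inl i) : MvPolynomial (Fin a ⊕ Fin a) ℚ) ^ 2) (esymm (Fin a) ℚ 1)) ^ 2)
      = Polynomial.C ((c : ℂ) * E2 + (d : ℂ) * E1 ^ 2) * Polynomial.X ^ 4 := by
    rw [map_add, map_mul, map_mul, map_pow, hA, hB, aeval_C, aeval_C,
      Polynomial.algebraMap_apply, Polynomial.algebraMap_apply,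
      eq_ratCast (algebraMap ℚ ℂ) c, eq_ratCast (algebraMap ℚ ℂ) d]
    rw [map_add, map_mul, map_mul, map_pow]
    ring
  rw [hval] at hmem
  rw [Ideal.mem_span_singleton] at hmem
  by_contra he
  have hne : Polynomial.C ((c : ℂ) * E2 + (d : ℂ) * E1 ^ 2) * Polynomial.X ^ 4
      ≠ (0 : Polynomial ℂ) :=
    mul_ne_zero (Polynomial.C_ne_zero.mpr he) (pow_ne_zero _ Polynomial.X_ne_zero)
  have hdeg := Polynomial.natDegree_le_of_dvd hmem hne
  rw [Polynomial.natDegree_X_pow, Polynomial.natDegree_C_mul_X_pow 4 _ he] at hdeg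
  omega

/-- First substitution: the square `1` among the `y`'s, the squares `ω⁴, ω²` among the `z`'s. -/
noncomputable def gam1 (a : ℕ) (i0 i1 : Fin a) : Fin a ⊕ Fin a → ℂ :=
  Sum.elim (fun x => if x = i0 then 1 else 0)
    (fun x => if x = i0 then ω ^ 2 else if x = i1 then ω else 0)

/-- Second substitution: the squares `1, ω⁴` among the `y`'s, the square `ω²` among the `z`'s. -/
noncomputable def gam2 (a : ℕ) (i0 i1 : Fin a) : Fin a ⊕ Fin a → ℂ :=
  Sum.elim (fun x => if x = i0 then 1 else if x = i1 then ω ^ 2 else 0)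
    (fun x => if x = i0 then ω else 0)

end EsymmAux

open EsymmAux Finset

/-- In `ℚ[y₁,…,y_a,z₁,…,z_a]` (`a ≥ 2`), if `c·e₂(y₁²,…,y_a²) + d·e₁(y₁²,…,y_a²)²`
lies in the ideal generated by the elementary symmetric polynomials `e₁,…,e_{2a}`
of the squares of all the variables together with the monomial
`y₁⋯y_a·z₁⋯z_a`, then `c = d = 0`. -/
theorem esymm_sq_linear_independent_mod_span_with_euler (a : ℕ) (ha : 2 ≤ a) (c d : ℚ)
    (h : C c * aeval (fun i : Fin a => (X (Sum.inl i) : MvPolynomial (Fin a ⊕ Fin a) ℚ) ^ 2)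
            (esymm (Fin a) ℚ 2)
        + C d * (aeval (fun i : Fin a => (X (Sum.inl i) : MvPolynomial (Fin a ⊕ Fin a) ℚ) ^ 2)
            (esymm (Fin a) ℚ 1)) ^ 2
      ∈ Ideal.span
          ((Set.range fun k : Fin (a + a) =>
              aeval (fun i : Fin a ⊕ Fin a => (X i : MvPolynomial (Fin a ⊕ Fin a) ℚ) ^ 2)
                (esymm (Fin a ⊕ Fin a) ℚ ((k : ℕ) + 1)))
            ∪ {(∏ i : Fin a, (X (Sum.inl i) : MvPolynomial (Fin a ⊕ Fin a) ℚ))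
                * ∏ i : Fin a, (X (Sum.inr i) : MvPolynomial (Fin a ⊕ Fin a) ℚ)})) :
    c = 0 ∧ d = 0 := by
  classical
  obtain ⟨i0, i1, hne⟩ : ∃ i0 i1 : Fin a, i0 ≠ i1 :=
    ⟨⟨0, by omega⟩, ⟨1, by omega⟩, by simp [Fin.ext_iff]⟩
  have hne' : i1 ≠ i0 := hne.symm
  -- First substitution: kills `e₂(y²)` to extract `d`.
  have v11 : gam1 a i0 i1 (Sum.inl i0) = 1 := by simp [gam1]
  have v12 : gam1 a i0 i1 (Sum.inr i0) = ω ^ 2 := by simp [gam1]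
  have v13 : gam1 a i0 i1 (Sum.inr i1) = ω := by simp [gam1, hne']
  have hsupp1 : ∀ x ∉ ({Sum.inl i0, Sum.inr i0, Sum.inr i1} : Finset (Fin a ⊕ Fin a)),
      gam1 a i0 i1 x ^ 2 = 0 := by
    rintro (v | v) hx
    · have hv : v ≠ i0 := by rintro rfl; exact hx (by simp)
      simp [gam1, hv]
    · have hv0 : v ≠ i0 := by rintro rfl; exact hx (by simp)
      have hv1 : v ≠ i1 := by rintro rfl; exact hx (by simp)
      simp [gam1, hv0, hv1]
  have hi1 : (Sum.inl i0 : Fin a ⊕ Fin a) ∉ ({Sum.inr i0, Sum.inr i1} : Finset (Fin a ⊕ Fin a)) := by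
    simp
  have hj1 : (Sum.inr i0 : Fin a ⊕ Fin a) ∉ ({Sum.inr i1} : Finset (Fin a ⊕ Fin a)) := by
    simp [hne]
  have hm1 : (∏ x : Fin a, gam1 a i0 i1 (Sum.inl x)) * ∏ x : Fin a, gam1 a i0 i1 (Sum.inr x)
      = 0 := by
    have hz : gam1 a i0 i1 (Sum.inl i1) = 0 := by simp [gam1, hne']
    rw [Finset.prod_eq_zero (Finset.mem_univ i1) hz, zero_mul]
  have h11 : ∑ t ∈ powersetCard 1 (univ : Finset (Fin a ⊕ Fin a)), ∏ x ∈ t,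
      gam1 a i0 i1 x ^ 2 = 0 := by
    rw [sparse (fun x => gam1 a i0 i1 x ^ 2) _ hsupp1 1, E1_triple _ hi1 hj1, v11, v12, v13]
    linear_combination (ω ^ 2 - ω + 1) * homega
  have h21 : ∑ t ∈ powersetCard 2 (univ : Finset (Fin a ⊕ Fin a)), ∏ x ∈ t,
      gam1 a i0 i1 x ^ 2 = 0 := by
    rw [sparse (fun x => gam1 a i0 i1 x ^ 2) _ hsupp1 2, E2_triple _ hi1 hj1, v11, v12, v13]
    linear_combination (ω ^ 4 - ω ^ 3 + ω ^ 2) * homega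
  have key1 := transport a c d (gam1 a i0 i1) hm1 h11 h21 h
  have hsupp1' : ∀ x ∉ ({i0} : Finset (Fin a)), gam1 a i0 i1 (Sum.inl x) ^ 2 = 0 := by
    intro x hx
    have hv : x ≠ i0 := by simpa using hx
    simp [gam1, hv]
  rw [sparse (fun x => gam1 a i0 i1 (Sum.inl x) ^ 2) _ hsupp1' 2,
    sparse (fun x => gam1 a i0 i1 (Sum.inl x) ^ 2) _ hsupp1' 1,
    E2_single, E1_single, v11] at key1
  have hd : d = 0 := by
    have hdc : (d : ℂ) = 0 := by linear_combination key1
    exact_mod_cast hdc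
  -- Second substitution: extracts `c`.
  have v21 : gam2 a i0 i1 (Sum.inl i0) = 1 := by simp [gam2]
  have v22 : gam2 a i0 i1 (Sum.inl i1) = ω ^ 2 := by simp [gam2, hne']
  have v23 : gam2 a i0 i1 (Sum.inr i0) = ω := by simp [gam2]
  have hsupp2 : ∀ x ∉ ({Sum.inl i0, Sum.inl i1, Sum.inr i0} : Finset (Fin a ⊕ Fin a)),
      gam2 a i0 i1 x ^ 2 = 0 := by
    rintro (v | v) hx
    · have hv0 : v ≠ i0 := by rintro rfl; exact hx (by simp)
      have hv1 : v ≠ i1 := by rintro rfl; exact hx (by simp)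
      simp [gam2, hv0, hv1]
    · have hv : v ≠ i0 := by rintro rfl; exact hx (by simp)
      simp [gam2, hv]
  have hi2 : (Sum.inl i0 : Fin a ⊕ Fin a) ∉ ({Sum.inl i1, Sum.inr i0} : Finset (Fin a ⊕ Fin a)) := by
    simp [hne]
  have hj2 : (Sum.inl i1 : Fin a ⊕ Fin a) ∉ ({Sum.inr i0} : Finset (Fin a ⊕ Fin a)) := by
    simp
  have hm2 : (∏ x : Fin a, gam2 a i0 i1 (Sum.inl x)) * ∏ x : Fin a, gam2 a i0 i1 (Sum.inr x)
      = 0 := by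
    have hz : gam2 a i0 i1 (Sum.inr i1) = 0 := by simp [gam2, hne']
    have hpz : (∏ x : Fin a, gam2 a i0 i1 (Sum.inr x)) = 0 :=
      Finset.prod_eq_zero (Finset.mem_univ i1) hz
    rw [hpz, mul_zero]
  have h12 : ∑ t ∈ powersetCard 1 (univ : Finset (Fin a ⊕ Fin a)), ∏ x ∈ t,
      gam2 a i0 i1 x ^ 2 = 0 := by
    rw [sparse (fun x => gam2 a i0 i1 x ^ 2) _ hsupp2 1, E1_triple _ hi2 hj2, v21, v22, v23]
    linear_combination (ω ^ 2 - ω + 1) * homega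
  have h22 : ∑ t ∈ powersetCard 2 (univ : Finset (Fin a ⊕ Fin a)), ∏ x ∈ t,
      gam2 a i0 i1 x ^ 2 = 0 := by
    rw [sparse (fun x => gam2 a i0 i1 x ^ 2) _ hsupp2 2, E2_triple _ hi2 hj2, v21, v22, v23]
    linear_combination (ω ^ 4 - ω ^ 3 + ω ^ 2) * homega
  have key2 := transport a c d (gam2 a i0 i1) hm2 h12 h22 h
  have hsupp2' : ∀ x ∉ ({i0, i1} : Finset (Fin a)), gam2 a i0 i1 (Sum.inl x) ^ 2 = 0 := by
    intro x hx
    have hv0 : x ≠ i0 := by rintro rfl; exact hx (by simp)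
    have hv1 : x ≠ i1 := by rintro rfl; exact hx (by simp)
    simp [gam2, hv0, hv1]
  have hij' : i0 ∉ ({i1} : Finset (Fin a)) := by simp [hne]
  rw [sparse (fun x => gam2 a i0 i1 (Sum.inl x) ^ 2) _ hsupp2' 2,
    sparse (fun x => gam2 a i0 i1 (Sum.inl x) ^ 2) _ hsupp2' 1,
    E2_pair _ hij', E1_pair _ hij', v21, v22] at key2
  have hc : c = 0 := by
    rw [hd] at key2
    push_cast at key2
    have hcc : (c : ℂ) * ω ^ 4 = 0 := by linear_combination key2
    rcases mul_eq_zero.mp hcc with hc0 | hω4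
    · exact_mod_cast hc0
    · exact absurd hω4 (pow_ne_zero _ omega_ne)
  exact ⟨hc, hd⟩
end

section
/- Let p, q ≥ 2 and work in ℚ[y₁,…,y_p, z₁,…,z_q]. Let I be the ideal generated by the elementary symmetric polynomials e₁,…,e_{p+q} evaluated at the p+q squares y₁²,…,y_p², z₁²,…,z_q². If c, d ∈ ℚ are such that c·e₂(y₁²,…,y_p²) + d·(e₁(y₁²,…,y_p²))² belongs to I, then c = d = 0. -/
open MvPolynomial Finset

lemma sum_pc_one {ι A : Type*} [DecidableEq ι] [CommRing A] (v : ι → A) (s : Finset ι) :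
    ∑ S ∈ s.powersetCard 1, ∏ i ∈ S, v i = ∑ i ∈ s, v i := by
  rw [Finset.powersetCard_one, Finset.sum_map]
  simp

lemma two_mul_sum_pc_two {ι A : Type*} [DecidableEq ι] [CommRing A] (v : ι → A) (s : Finset ι) :
    2 * ∑ S ∈ s.powersetCard 2, ∏ i ∈ S, v i = (∑ i ∈ s, v i) ^ 2 - ∑ i ∈ s, v i ^ 2 := by
  induction s using Finset.induction_on with
  | empty => rw [Finset.powersetCard_eq_empty.2 (by simp)]; simp
  | @insert a s ha ih =>
    rw [Finset.powersetCard_succ_insert ha, Finset.sum_union, Finset.sum_image]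
    · rw [Finset.sum_insert ha, Finset.sum_insert ha]
      have hins : ∀ T ∈ s.powersetCard 1, ∏ i ∈ insert a T, v i = v a * ∏ i ∈ T, v i := by
        intro T hT
        have hT' := (Finset.mem_powersetCard.1 hT).1
        rw [Finset.prod_insert (fun haT => ha (hT' haT))]
      rw [Finset.sum_congr rfl hins, ← Finset.mul_sum, sum_pc_one]
      ring_nf
      ring_nf at ih
      linear_combination ih
    · intro T₁ h₁ T₂ h₂ hE
      have h₁' := (Finset.mem_powersetCard.1 h₁).1
      have h₂' := (Finset.mem_powersetCard.1 h₂).1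
      have : (insert a T₁).erase a = (insert a T₂).erase a := by rw [hE]
      rwa [Finset.erase_insert (fun h => ha (h₁' h)),
        Finset.erase_insert (fun h => ha (h₂' h))] at this
    · rw [Finset.disjoint_left]
      intro S hS hS'
      obtain ⟨T, hT, rfl⟩ := Finset.mem_image.1 hS'
      exact ha ((Finset.mem_powersetCard.1 hS).1 (Finset.mem_insert_self a T))

lemma aeval_sq_esymm {ι : Type*} [Fintype ι] [DecidableEq ι] (u : ι → ℂ) (k : ℕ) :
    aeval (fun i => (Polynomial.C (u i) * Polynomial.X) ^ 2) (esymm ι ℚ k)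
      = Polynomial.C (∑ S ∈ (Finset.univ : Finset ι).powersetCard k, ∏ i ∈ S, u i ^ 2)
          * Polynomial.X ^ (2 * k) := by
  rw [esymm, map_sum, map_sum, Finset.sum_mul]
  refine Finset.sum_congr rfl fun S hS => ?_
  have hcard : S.card = k := (Finset.mem_powersetCard.1 hS).2
  rw [map_prod]
  simp only [aeval_X]
  calc ∏ i ∈ S, (Polynomial.C (u i) * Polynomial.X) ^ 2
      = ∏ i ∈ S, (Polynomial.C (u i ^ 2) * Polynomial.X ^ 2) := by
        refine Finset.prod_congr rfl fun i _ => by rw [mul_pow, ← Polynomial.C_pow]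
    _ = Polynomial.C (∏ i ∈ S, u i ^ 2) * Polynomial.X ^ (2 * k) := by
        rw [Finset.prod_mul_distrib, ← map_prod, Finset.prod_const, ← pow_mul, hcard,
          Nat.mul_comm]

lemma key_eval (p q : ℕ) (c d : ℚ)
    (h : C c * aeval (fun i : Fin p => (X (Sum.inl i) : MvPolynomial (Fin p ⊕ Fin q) ℚ) ^ 2)
            (esymm (Fin p) ℚ 2)
        + C d * (aeval (fun i : Fin p => (X (Sum.inl i) : MvPolynomial (Fin p ⊕ Fin q) ℚ) ^ 2)
            (esymm (Fin p) ℚ 1)) ^ 2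
      ∈ Ideal.span (Set.range fun k : Fin (p + q) =>
          aeval (fun i : Fin p ⊕ Fin q => (X i : MvPolynomial (Fin p ⊕ Fin q) ℚ) ^ 2)
            (esymm (Fin p ⊕ Fin q) ℚ ((k : ℕ) + 1))))
    (w : Fin p ⊕ Fin q → ℂ)
    (h1 : ∑ i : Fin p ⊕ Fin q, w i ^ 2 = 0) (h2 : ∑ i : Fin p ⊕ Fin q, w i ^ 4 = 0) :
    (c : ℂ) * (∑ S ∈ (Finset.univ : Finset (Fin p)).powersetCard 2, ∏ i ∈ S, w (Sum.inl i) ^ 2)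
      + (d : ℂ) * (∑ i : Fin p, w (Sum.inl i) ^ 2) ^ 2 = 0 := by
  set a : Fin p ⊕ Fin q → Polynomial ℂ := fun i => Polynomial.C (w i) * Polynomial.X with ha
  -- image of any generator is divisible by X^5
  have hgen : ∀ k : Fin (p + q), (Polynomial.X : Polynomial ℂ) ^ 5 ∣
      aeval a (aeval (fun i : Fin p ⊕ Fin q => (X i : MvPolynomial (Fin p ⊕ Fin q) ℚ) ^ 2)
        (esymm (Fin p ⊕ Fin q) ℚ ((k : ℕ) + 1))) := by
    intro k
    rw [comp_aeval_apply]
    have : (fun i : Fin p ⊕ Fin q =>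
        aeval a ((X i : MvPolynomial (Fin p ⊕ Fin q) ℚ) ^ 2))
        = fun i => (Polynomial.C (w i) * Polynomial.X) ^ 2 := by
      funext i; simp [ha]
    rw [this, aeval_sq_esymm]
    rcases Nat.lt_or_ge (k : ℕ) 2 with hk | hk
    · interval_cases h : (k : ℕ)
      · -- degree 1 generator
        rw [sum_pc_one]
        simp only [h1, map_zero, zero_mul]
        exact dvd_zero _
      · -- degree 2 generator
        have h22 : (∑ S ∈ (Finset.univ : Finset (Fin p ⊕ Fin q)).powersetCard 2,
            ∏ i ∈ S, w i ^ 2) = 0 := by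
          have hh := two_mul_sum_pc_two (fun i => w i ^ 2) (Finset.univ : Finset (Fin p ⊕ Fin q))
          have h4 : ∑ i : Fin p ⊕ Fin q, (w i ^ 2) ^ 2 = 0 := by
            simpa [← pow_mul] using h2
          rw [h1, h4] at hh
          have h0' : (2 : ℂ) * ∑ S ∈ (Finset.univ : Finset (Fin p ⊕ Fin q)).powersetCard 2,
              ∏ i ∈ S, w i ^ 2 = 0 := by rw [hh]; ring
          exact (mul_eq_zero.1 h0').resolve_left two_ne_zero
        rw [h22]
        simp only [map_zero, zero_mul]
        exact dvd_zero _
    · exact Dvd.dvd.mul_left (pow_dvd_pow _ (by omega)) _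
  -- hence image of the element is divisible by X^5
  have hle : Ideal.span (Set.range fun k : Fin (p + q) =>
        aeval (fun i : Fin p ⊕ Fin q => (X i : MvPolynomial (Fin p ⊕ Fin q) ℚ) ^ 2)
          (esymm (Fin p ⊕ Fin q) ℚ ((k : ℕ) + 1)))
      ≤ Ideal.comap (aeval a : MvPolynomial (Fin p ⊕ Fin q) ℚ →ₐ[ℚ] Polynomial ℂ).toRingHom
          (Ideal.span {(Polynomial.X : Polynomial ℂ) ^ 5}) := by
    rw [Ideal.span_le]
    rintro _ ⟨k, rfl⟩
    exact Ideal.mem_comap.2 (Ideal.mem_span_singleton.2 (hgen k))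
  have hdvd := Ideal.mem_span_singleton.1 (Ideal.mem_comap.1 (hle h))
  -- compute the image of the element
  have hc1 : ∀ j : ℕ,
      aeval a (aeval (fun i : Fin p => (X (Sum.inl i) : MvPolynomial (Fin p ⊕ Fin q) ℚ) ^ 2)
        (esymm (Fin p) ℚ j))
      = Polynomial.C (∑ S ∈ (Finset.univ : Finset (Fin p)).powersetCard j,
          ∏ i ∈ S, w (Sum.inl i) ^ 2) * Polynomial.X ^ (2 * j) := by
    intro j
    rw [comp_aeval_apply]
    have : (fun i : Fin p =>
        aeval a ((X (Sum.inl i) : MvPolynomial (Fin p ⊕ Fin q) ℚ) ^ 2))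
        = fun i => (Polynomial.C (w (Sum.inl i)) * Polynomial.X) ^ 2 := by
      funext i; simp [ha]
    rw [this, aeval_sq_esymm]
  simp only [AlgHom.toRingHom_eq_coe, RingHom.coe_coe] at hdvd
  rw [map_add, map_mul, map_mul, map_pow, hc1 1, hc1 2, aeval_C, aeval_C] at hdvd
  set E2 : ℂ := ∑ S ∈ (Finset.univ : Finset (Fin p)).powersetCard 2, ∏ i ∈ S, w (Sum.inl i) ^ 2
    with hE2
  set E1 : ℂ := ∑ S ∈ (Finset.univ : Finset (Fin p)).powersetCard 1, ∏ i ∈ S, w (Sum.inl i) ^ 2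
    with hE1
  have hE1' : E1 = ∑ i : Fin p, w (Sum.inl i) ^ 2 := sum_pc_one _ _
  have halg : ∀ r : ℚ, algebraMap ℚ (Polynomial ℂ) r = Polynomial.C ((r : ℂ)) := by
    intro r
    rw [show (algebraMap ℚ (Polynomial ℂ)) r = Polynomial.C (algebraMap ℚ ℂ r) from rfl]
    norm_num [eq_ratCast (algebraMap ℚ ℂ) r]
  rw [halg, halg] at hdvd
  have heq : Polynomial.C ((c : ℂ)) * (Polynomial.C E2 * Polynomial.X ^ (2 * 2))
      + Polynomial.C ((d : ℂ)) * (Polynomial.C E1 * Polynomial.X ^ (2 * 1)) ^ 2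
      = Polynomial.C ((c : ℂ) * E2 + (d : ℂ) * E1 ^ 2) * Polynomial.X ^ 4 := by
    have hsq : (Polynomial.C E1 * Polynomial.X ^ (2 * 1)) ^ 2
        = Polynomial.C (E1 ^ 2) * Polynomial.X ^ 4 := by
      rw [mul_pow, ← Polynomial.C_pow]; ring
    rw [hsq, show 2 * 2 = 4 from rfl, Polynomial.C_add, Polynomial.C_mul, Polynomial.C_mul]
    ring
  rw [heq] at hdvd
  have hcoeff := Polynomial.X_pow_dvd_iff.1 hdvd 4 (by norm_num)
  rw [Polynomial.coeff_C_mul, Polynomial.coeff_X_pow, if_pos rfl, mul_one] at hcoeff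
  rw [hE1'] at hcoeff
  exact hcoeff

lemma sum_ite01 {n : ℕ} [NeZero n] (hn : 2 ≤ n) (A B : ℂ) :
    ∑ j : Fin n, (if j = 0 then A else if j = 1 then B else 0) = A + B := by
  have h01 : (0 : Fin n) ≠ 1 := by
    have hv : ((1 : Fin n) : ℕ) = 1 % n := Fin.val_one' n
    have hv1 : ((1 : Fin n) : ℕ) = 1 := by rw [hv]; exact Nat.mod_eq_of_lt (by omega)
    intro hE
    have := congrArg Fin.val hE
    rw [Fin.val_zero, hv1] at this
    omega
  have hsplit : ∀ j : Fin n, (if j = 0 then A else if j = 1 then B else 0)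
      = (if j = 0 then A else 0) + (if j = 1 then B else 0) := by
    intro j
    rcases eq_or_ne j 0 with rfl | hj0
    · rw [if_pos rfl, if_pos rfl, if_neg h01, add_zero]
    · rw [if_neg hj0, if_neg hj0, zero_add]
  rw [Finset.sum_congr rfl fun j _ => hsplit j, Finset.sum_add_distrib]
  simp [Finset.sum_ite_eq']

lemma sum_ite01_pow {n : ℕ} [NeZero n] (hn : 2 ≤ n) (A B : ℂ) (m : ℕ) (hm : m ≠ 0) :
    ∑ j : Fin n, (if j = 0 then A else if j = 1 then B else 0) ^ m = A ^ m + B ^ m := by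
  have hpt : ∀ j : Fin n, (if j = 0 then A else if j = 1 then B else 0) ^ m
      = (if j = 0 then A ^ m else if j = 1 then B ^ m else 0) := by
    intro j; split_ifs <;> simp [zero_pow hm]
  rw [Finset.sum_congr rfl fun j _ => hpt j]
  exact sum_ite01 hn (A ^ m) (B ^ m)

/-- In `ℚ[y₁,…,y_p,z₁,…,z_q]` (`p,q ≥ 2`), if `c·e₂(y₁²,…,y_p²) + d·e₁(y₁²,…,y_p²)²`
lies in the ideal generated by the elementary symmetric polynomials `e₁,…,e_{p+q}`
of the squares of all the variables, then `c = d = 0`. -/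
theorem esymm_sq_linear_independent_mod_span (p q : ℕ) (hp : 2 ≤ p) (hq : 2 ≤ q) (c d : ℚ)
    (h : C c * aeval (fun i : Fin p => (X (Sum.inl i) : MvPolynomial (Fin p ⊕ Fin q) ℚ) ^ 2)
            (esymm (Fin p) ℚ 2)
        + C d * (aeval (fun i : Fin p => (X (Sum.inl i) : MvPolynomial (Fin p ⊕ Fin q) ℚ) ^ 2)
            (esymm (Fin p) ℚ 1)) ^ 2
      ∈ Ideal.span (Set.range fun k : Fin (p + q) =>
          aeval (fun i : Fin p ⊕ Fin q => (X i : MvPolynomial (Fin p ⊕ Fin q) ℚ) ^ 2)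
            (esymm (Fin p ⊕ Fin q) ℚ ((k : ℕ) + 1)))) :
    c = 0 ∧ d = 0 := by
  haveI : NeZero p := ⟨by omega⟩
  haveI : NeZero q := ⟨by omega⟩
  have hs3 : ((Real.sqrt 3 : ℝ) : ℂ) ^ 2 = 3 := by
    rw [← Complex.ofReal_pow, Real.sq_sqrt (by norm_num : (0:ℝ) ≤ 3)]; norm_num
  set s3 : ℂ := ((Real.sqrt 3 : ℝ) : ℂ) with hs3def
  set ω : ℂ := (-1 + s3 * Complex.I) / 2 with hωdef
  have hω3 : ω ^ 3 = 1 := by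
    rw [hωdef]
    linear_combination ((s3 * Complex.I ^ 3 - 3 * Complex.I ^ 2) / 8) * hs3
      + ((3 * s3 * Complex.I - 9) / 8) * Complex.I_sq
  have h0 : 1 + ω + ω ^ 2 = 0 := by
    rw [hωdef]
    linear_combination (Complex.I ^ 2 / 4) * hs3 + (3 / 4) * Complex.I_sq
  have hs2 : ((Real.sqrt 2 : ℝ) : ℂ) ^ 2 = 2 := by
    rw [← Complex.ofReal_pow, Real.sq_sqrt (by norm_num : (0:ℝ) ≤ 2)]; norm_num
  have hs2ne : ((Real.sqrt 2 : ℝ) : ℂ) ≠ 0 := by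
    simp only [ne_eq, Complex.ofReal_eq_zero]
    exact (Real.sqrt_pos.2 (by norm_num)).ne'
  set ζ : ℂ := (1 + Complex.I) / ((Real.sqrt 2 : ℝ) : ℂ) with hζdef
  set ξ : ℂ := (1 - Complex.I) / ((Real.sqrt 2 : ℝ) : ℂ) with hξdef
  have hζ : ζ ^ 2 = Complex.I := by
    rw [hζdef, div_pow, hs2]
    linear_combination Complex.I_sq / 2
  have hξ : ξ ^ 2 = -Complex.I := by
    rw [hξdef, div_pow, hs2]
    linear_combination Complex.I_sq / 2
  constructor
  · -- c = 0 via the evaluation with squares (1, -1, i, -i)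
    set w2 : Fin p ⊕ Fin q → ℂ :=
      Sum.elim (fun i : Fin p => if i = 0 then 1 else if i = 1 then Complex.I else 0)
        (fun j : Fin q => if j = 0 then ζ else if j = 1 then ξ else 0) with hw2
    have h21 : ∑ i : Fin p ⊕ Fin q, w2 i ^ 2 = 0 := by
      rw [Fintype.sum_sum_type]
      simp only [hw2, Sum.elim_inl, Sum.elim_inr]
      rw [sum_ite01_pow hp _ _ 2 two_ne_zero, sum_ite01_pow hq _ _ 2 two_ne_zero, hζ, hξ]
      linear_combination Complex.I_sq
    have h22 : ∑ i : Fin p ⊕ Fin q, w2 i ^ 4 = 0 := by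
      rw [Fintype.sum_sum_type]
      simp only [hw2, Sum.elim_inl, Sum.elim_inr]
      rw [sum_ite01_pow hp _ _ 4 (by norm_num), sum_ite01_pow hq _ _ 4 (by norm_num)]
      have h4ζ : ζ ^ 4 = (ζ ^ 2) ^ 2 := by ring
      have h4ξ : ξ ^ 4 = (ξ ^ 2) ^ 2 := by ring
      rw [h4ζ, h4ξ, hζ, hξ]
      linear_combination (Complex.I ^ 2 + 1) * Complex.I_sq
    have hkey := key_eval p q c d h w2 h21 h22
    have hE1 : ∑ i : Fin p, w2 (Sum.inl i) ^ 2 = 0 := by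
      simp only [hw2, Sum.elim_inl]
      rw [sum_ite01_pow hp _ _ 2 two_ne_zero]
      linear_combination Complex.I_sq
    have hE4 : ∑ i : Fin p, w2 (Sum.inl i) ^ 4 = 2 := by
      simp only [hw2, Sum.elim_inl]
      rw [sum_ite01_pow hp _ _ 4 (by norm_num)]
      linear_combination (Complex.I ^ 2 - 1) * Complex.I_sq
    have hE2 : ∑ S ∈ (Finset.univ : Finset (Fin p)).powersetCard 2,
        ∏ i ∈ S, w2 (Sum.inl i) ^ 2 = -1 := by
      have hh := two_mul_sum_pc_two (fun i => w2 (Sum.inl i) ^ 2) (Finset.univ : Finset (Fin p))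
      have h4' : ∑ i : Fin p, (w2 (Sum.inl i) ^ 2) ^ 2 = 2 := by
        simpa [← pow_mul] using hE4
      rw [hE1, h4'] at hh
      have h0' : (2 : ℂ) * (∑ S ∈ (Finset.univ : Finset (Fin p)).powersetCard 2,
          ∏ i ∈ S, w2 (Sum.inl i) ^ 2) = 2 * (-1) := by rw [hh]; ring
      exact mul_left_cancel₀ two_ne_zero h0'
    rw [hE1, hE2] at hkey
    have : (c : ℂ) = 0 := by linear_combination -hkey
    exact_mod_cast this
  · -- d = 0 via the evaluation with squares (1, ω, ω²)
    set w1 : Fin p ⊕ Fin q → ℂ :=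
      Sum.elim (fun i : Fin p => if i = 0 then 1 else if i = 1 then 0 else 0)
        (fun j : Fin q => if j = 0 then ω ^ 2 else if j = 1 then ω else 0) with hw1
    have h11 : ∑ i : Fin p ⊕ Fin q, w1 i ^ 2 = 0 := by
      rw [Fintype.sum_sum_type]
      simp only [hw1, Sum.elim_inl, Sum.elim_inr]
      rw [sum_ite01_pow hp _ _ 2 two_ne_zero, sum_ite01_pow hq _ _ 2 two_ne_zero]
      linear_combination ω * hω3 + h0
    have h12 : ∑ i : Fin p ⊕ Fin q, w1 i ^ 4 = 0 := by
      rw [Fintype.sum_sum_type]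
      simp only [hw1, Sum.elim_inl, Sum.elim_inr]
      rw [sum_ite01_pow hp _ _ 4 (by norm_num), sum_ite01_pow hq _ _ 4 (by norm_num)]
      linear_combination (ω ^ 5 + ω ^ 2 + ω) * hω3 + h0
    have hkey := key_eval p q c d h w1 h11 h12
    have hE1 : ∑ i : Fin p, w1 (Sum.inl i) ^ 2 = 1 := by
      simp only [hw1, Sum.elim_inl]
      rw [sum_ite01_pow hp _ _ 2 two_ne_zero]
      norm_num
    have hE4 : ∑ i : Fin p, w1 (Sum.inl i) ^ 4 = 1 := by
      simp only [hw1, Sum.elim_inl]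
      rw [sum_ite01_pow hp _ _ 4 (by norm_num)]
      norm_num
    have hE2 : ∑ S ∈ (Finset.univ : Finset (Fin p)).powersetCard 2,
        ∏ i ∈ S, w1 (Sum.inl i) ^ 2 = 0 := by
      have hh := two_mul_sum_pc_two (fun i => w1 (Sum.inl i) ^ 2) (Finset.univ : Finset (Fin p))
      have h4' : ∑ i : Fin p, (w1 (Sum.inl i) ^ 2) ^ 2 = 1 := by
        simpa [← pow_mul] using hE4
      rw [hE1, h4'] at hh
      have h0' : (2 : ℂ) * (∑ S ∈ (Finset.univ : Finset (Fin p)).powersetCard 2,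
          ∏ i ∈ S, w1 (Sum.inl i) ^ 2) = 2 * 0 := by rw [hh]; ring
      exact mul_left_cancel₀ two_ne_zero h0'
    rw [hE1, hE2] at hkey
    have : (d : ℂ) = 0 := by linear_combination hkey
    exact_mod_cast this
end

section
/- Let n ≥ 3 and work in ℚ[y₁,…,y_n]. Let I be the ideal generated by the elementary symmetric polynomials e₁(y₁²,…,y_n²),…,e_n(y₁²,…,y_n²) together with the monomial y₁y₂⋯y_n. Then (y₁+⋯+y_n)² does not belong to I. -/
open MvPolynomial

/-- Product of monomials with coefficient 1 is the monomial of the sum of exponents. -/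
lemma prod_monomial_one {σ : Type*} (t : Finset σ) (d : σ → (σ →₀ ℕ)) :
    (∏ i ∈ t, (monomial (d i) (1 : ℚ) : MvPolynomial σ ℚ))
      = monomial (∑ i ∈ t, d i) (1 : ℚ) := by
  classical
  induction t using Finset.cons_induction with
  | empty => simp [monomial_zero']
  | cons a s ha ih =>
      rw [Finset.prod_cons, ih, Finset.sum_cons, monomial_mul, one_mul]

/-- In `ℚ[y₁,…,yₙ]` (`n ≥ 3`), the polynomial `(y₁+⋯+yₙ)²` does not belong to
the ideal generated by the elementary symmetric polynomials of the squares of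
the variables together with the monomial `y₁y₂⋯yₙ`. -/
theorem sum_sq_not_mem_span_esymm_squares_with_euler (n : ℕ) (hn : 3 ≤ n) :
    (∑ i : Fin n, X i : MvPolynomial (Fin n) ℚ) ^ 2
      ∉ Ideal.span
          ((Set.range fun j : Fin n =>
              aeval (fun i : Fin n => (X i : MvPolynomial (Fin n) ℚ) ^ 2)
                (esymm (Fin n) ℚ ((j : ℕ) + 1)))
            ∪ {∏ i : Fin n, (X i : MvPolynomial (Fin n) ℚ)}) := by
  classical
  set i0 : Fin n := ⟨0, by omega⟩
  set i1 : Fin n := ⟨1, by omega⟩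
  set i2 : Fin n := ⟨2, by omega⟩
  have h01 : i0 ≠ i1 := by simp [i0, i1, Fin.ext_iff]
  -- the target monomial exponent: y_{i0} * y_{i1}
  set m : Fin n →₀ ℕ := Finsupp.single i0 1 + Finsupp.single i1 1 with hm
  have hm_le : ∀ i : Fin n, m i ≤ 1 := by
    intro i
    simp only [hm, Finsupp.add_apply, Finsupp.single_apply]
    split_ifs with h1 h2
    · exact absurd (h1.trans h2.symm) h01
    all_goals omega
  have hm_i2 : m i2 = 0 := by
    have h02 : i0 ≠ i2 := by simp [i0, i2, Fin.ext_iff]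
    have h12 : i1 ≠ i2 := by simp [i1, i2, Fin.ext_iff]
    simp [hm, Finsupp.single_apply, h02, h12]
  -- Step 1: each generator's coefficients vanish on exponents below m.
  have key : ∀ g ∈ ((Set.range fun j : Fin n =>
              aeval (fun i : Fin n => (X i : MvPolynomial (Fin n) ℚ) ^ 2)
                (esymm (Fin n) ℚ ((j : ℕ) + 1)))
            ∪ {∏ i : Fin n, (X i : MvPolynomial (Fin n) ℚ)}),
      ∀ e : Fin n →₀ ℕ, (∀ i, e i ≤ m i) → coeff e g = 0 := by
    rintro g (⟨j, rfl⟩ | hg) e he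
    · -- elementary symmetric polynomial of squares
      dsimp only
      rw [show esymm (Fin n) ℚ ((j : ℕ) + 1)
          = ∑ t ∈ Finset.powersetCard ((j : ℕ) + 1) Finset.univ, ∏ i ∈ t, X i from rfl]
      rw [map_sum, coeff_sum]
      refine Finset.sum_eq_zero fun t ht => ?_
      rw [map_prod]
      simp only [map_pow, aeval_X]
      have hXm : ∀ i : Fin n, (X i : MvPolynomial (Fin n) ℚ) ^ 2
          = monomial (Finsupp.single i 2) 1 := fun i => X_pow_eq_monomial
      simp only [hXm]
      have hne : (∑ i' ∈ t, Finsupp.single i' (2 : ℕ)) ≠ e := by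
        intro hEq
        have hcard : t.card = (j : ℕ) + 1 := (Finset.mem_powersetCard.mp ht).2
        have htne : t.Nonempty := Finset.card_pos.mp (by omega)
        obtain ⟨i, hi⟩ := htne
        have h2 : (∑ i' ∈ t, Finsupp.single i' (2 : ℕ)) i = 2 := by
          rw [Finset.sum_apply']
          rw [Finset.sum_eq_single i]
          · simp [Finsupp.single_apply]
          · intro b _ hb; simp [Finsupp.single_apply, hb]
          · intro h; exact absurd hi h
        have he2 : e i = 2 := by rw [← hEq]; exact h2
        have := hm_le i
        have := he i
        omega
      rw [prod_monomial_one, coeff_monomial, if_neg hne]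
    · -- the product of all variables
      rw [Set.mem_singleton_iff] at hg
      subst hg
      have hX : ∀ i : Fin n, (X i : MvPolynomial (Fin n) ℚ)
          = monomial (Finsupp.single i 1) 1 := fun i => by
        rw [← pow_one (X i : MvPolynomial (Fin n) ℚ)]; exact X_pow_eq_monomial
      simp only [hX]
      have hne : (∑ i' : Fin n, Finsupp.single i' (1 : ℕ)) ≠ e := by
        intro hEq
        have h1 : (∑ i' : Fin n, Finsupp.single i' (1 : ℕ)) i2 = 1 := by
          rw [Finset.sum_apply']
          rw [Finset.sum_eq_single i2]
          · simp [Finsupp.single_apply]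
          · intro b _ hb; simp [Finsupp.single_apply, hb]
          · intro h; exact absurd (Finset.mem_univ i2) h
        have he1 : e i2 = 1 := by rw [← hEq]; exact h1
        have := he i2
        omega
      rw [prod_monomial_one, coeff_monomial, if_neg hne]
  -- Step 2: the coefficient of m vanishes on the whole ideal.
  intro hmem
  have hvanish : ∀ q : MvPolynomial (Fin n) ℚ,
      coeff m (q * (∑ i : Fin n, X i : MvPolynomial (Fin n) ℚ) ^ 2) = 0 := by
    have := Submodule.span_induction
      (p := fun p (_ : p ∈ Ideal.span _) =>
        ∀ q : MvPolynomial (Fin n) ℚ, coeff m (q * p) = 0)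
      (fun g hg q => by
        rw [coeff_mul]
        refine Finset.sum_eq_zero fun p hp => ?_
        have hsum := Finset.HasAntidiagonal.mem_antidiagonal.mp hp
        have hle : ∀ i, p.2 i ≤ m i := by
          intro i
          have : p.1 i + p.2 i = m i := by rw [← hsum]; rfl
          omega
        rw [key g hg p.2 hle, mul_zero])
      (fun q => by rw [mul_zero, coeff_zero])
      (fun x y _ _ hx hy q => by rw [mul_add, coeff_add, hx, hy, add_zero])
      (fun a x _ hx q => by
        rw [smul_eq_mul, ← mul_assoc]; exact hx (q * a))
      hmem
    exact this
  have h2 : coeff m ((∑ i : Fin n, X i : MvPolynomial (Fin n) ℚ) ^ 2) = 0 := by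
    have := hvanish 1
    rwa [one_mul] at this
  have hcoef : coeff m ((∑ i : Fin n, X i : MvPolynomial (Fin n) ℚ) ^ 2) = 2 := by
    rw [sq, Finset.sum_mul_sum, coeff_sum]
    simp only [coeff_sum]
    have hXX : ∀ i j : Fin n, (X i : MvPolynomial (Fin n) ℚ) * X j
        = monomial (Finsupp.single i 1 + Finsupp.single j 1) 1 := by
      intro i j
      rw [X, X, monomial_mul, one_mul]
    have hcond : ∀ i j : Fin n,
        (Finsupp.single i (1:ℕ) + Finsupp.single j 1 = m) ↔
          (i = i0 ∧ j = i1) ∨ (i = i1 ∧ j = i0) := by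
      intro i j
      rw [hm, Finsupp.single_add_single_eq_single_add_single one_ne_zero one_ne_zero]
      constructor
      · rintro (⟨h1, h2⟩ | ⟨-, h1, h2⟩ | ⟨habs, -, -⟩)
        · exact Or.inl ⟨h1, h2⟩
        · exact Or.inr ⟨h1, h2⟩
        · exact absurd habs (by norm_num)
      · rintro (⟨h1, h2⟩ | ⟨h1, h2⟩)
        · exact Or.inl ⟨h1, h2⟩
        · exact Or.inr (Or.inl ⟨rfl, h1, h2⟩)
    calc (∑ i : Fin n, ∑ j : Fin n, coeff m ((X i : MvPolynomial (Fin n) ℚ) * X j))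
        = ∑ i : Fin n, ∑ j : Fin n,
            (if (i = i0 ∧ j = i1) ∨ (i = i1 ∧ j = i0) then (1:ℚ) else 0) := by
          refine Finset.sum_congr rfl fun i _ => ?_
          refine Finset.sum_congr rfl fun j _ => ?_
          rw [hXX, coeff_monomial]
          simp only [hcond]
      _ = 2 := by
          have hrow : ∀ i : Fin n, (∑ j : Fin n,
              (if (i = i0 ∧ j = i1) ∨ (i = i1 ∧ j = i0) then (1:ℚ) else 0))
              = (if i = i0 then 1 else 0) + (if i = i1 then 1 else 0) := by
            intro i
            by_cases h0 : i = i0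
            · subst h0
              rw [if_pos rfl, if_neg (fun h => h01 h), add_zero]
              rw [Finset.sum_eq_single i1]
              · simp [h01]
              · intro b _ hb
                simp only [ite_eq_right_iff]
                rintro (⟨-, h⟩ | ⟨h, -⟩)
                · exact absurd h hb
                · exact absurd h h01
              · intro h; exact absurd (Finset.mem_univ i1) h
            · by_cases h1 : i = i1
              · subst h1
                rw [if_neg h0, if_pos rfl, zero_add]
                rw [Finset.sum_eq_single i0]
                · simp [h0]
                · intro b _ hb
                  simp only [ite_eq_right_iff]
                  rintro (⟨h, -⟩ | ⟨-, h⟩)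
                  · exact absurd h h0
                  · exact absurd h hb
                · intro h; exact absurd (Finset.mem_univ i0) h
              · rw [if_neg h0, if_neg h1, add_zero]
                refine Finset.sum_eq_zero fun j _ => ?_
                simp only [ite_eq_right_iff]
                rintro (⟨h, -⟩ | ⟨h, -⟩)
                · exact absurd h h0
                · exact absurd h h1
          rw [Finset.sum_congr rfl fun i _ => hrow i]
          rw [Finset.sum_add_distrib]
          rw [Finset.sum_ite_eq' Finset.univ i0 (fun _ => (1:ℚ))]
          rw [Finset.sum_ite_eq' Finset.univ i1 (fun _ => (1:ℚ))]
          norm_num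
  rw [hcoef] at h2
  norm_num at h2
end

section
/- In ℚ[y₁,…,y₈], let P be the product, over all sign tuples ε = (ε₁,…,ε₈) ∈ {±1}⁸ having an even number of entries equal to −1 (there are 128 such tuples), of the factors (1 − (ε₁y₁+⋯+ε₈y₈)/2). Then the degree-2 homogeneous component of P equals −16·(y₁²+⋯+y₈²), and the degree-4 homogeneous component of P equals 126·Σ_{i=1}^8 y_i⁴ + 244·Σ_{1≤i<j≤8} y_i² y_j². -/
/-!
Complementing the sign pattern `s` negates the weight `w s = ½ Σ εᵢ yᵢ`, and complements of even
sets are even, so the 128 factors pair up into the 64 factors `1 - (w s)²` indexed by the even sets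
containing `0`. As `(w s)²` is homogeneous of degree 2, the degree-2 and degree-4 components are
`-Σ (w s)²` and `((Σ (w s)²)² - Σ (w s)⁴) / 2`. These power sums are computed by orthogonality of
the characters `s ↦ (-1) ^ #(B ∩ s)` over the 64 sets: for `2 ≤ #B ≤ 6`, toggling a pair `{a, m}`
with `a ∈ B`, `m ∉ B` and `a, m ≠ 0` is a sign-reversing involution.
-/

open MvPolynomial Finset
open scoped symmDiff

theorem Finset.card_symmDiff_add_two_mul_card_inter {α : Type*} [DecidableEq α]
    (s t : Finset α) : #(s ∆ t) + 2 * #(s ∩ t) = #s + #t := by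
  have h := card_le_card (inter_subset_union : s ∩ t ⊆ s ∪ t)
  rw [symmDiff_eq_sup_sdiff_inf, sup_eq_union, inf_eq_inter,
    card_sdiff_of_subset inter_subset_union, ← card_union_add_card_inter]
  omega

theorem Finset.neg_one_pow_card_symmDiff {α R : Type*} [DecidableEq α] [Ring R]
    (s t : Finset α) : (-1 : R) ^ #(s ∆ t) = (-1) ^ #s * (-1) ^ #t := by
  rw [← pow_add, ← card_symmDiff_add_two_mul_card_inter, pow_add, pow_mul, neg_one_sq, one_pow,
    mul_one]

theorem Finset.sum_sq_eq_sum_sq_add_two_mul_sum_sum_Ioi {α R : Type*} [Fintype α] [LinearOrder α]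
    [LocallyFiniteOrderTop α] [LocallyFiniteOrderBot α] [CommSemiring R] (a : α → R) :
    (∑ i, a i) ^ 2 = ∑ i, a i ^ 2 + 2 * ∑ i, ∑ j ∈ Ioi i, a i * a j := by
  have hoff : ∑ i, ∑ j ∈ Ioi i, (a j * a i + a i * a j) = ∑ i, ∑ j ∈ {i}ᶜ, a j * a i :=
    sum_sum_Ioi_add_eq_sum_sum_off_diag fun i j => a i * a j
  have hdiag (i : α) : ∑ j, a j * a i = a i ^ 2 + ∑ j ∈ {i}ᶜ, a j * a i := by
    rw [← sum_add_sum_compl {i}, sum_singleton, sq]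
  rw [sq, sum_mul_sum, sum_comm, Fintype.sum_congr _ _ hdiag, sum_add_distrib, ← hoff, mul_sum]
  simp only [mul_sum, mul_comm (a _) (a _), two_mul, sum_add_distrib]

theorem Finset.pair_eq_pair_of_lt {α : Type*} [LinearOrder α] {i j k l : α} (hij : i < j)
    (hkl : k < l) (h : ({i, j} : Finset α) = {k, l}) : i = k ∧ j = l := by
  have hset := congrArg ((↑) : Finset α → Set α) h
  push_cast at hset
  rcases Set.pair_eq_pair_iff.1 hset with h' | ⟨rfl, rfl⟩
  · exact h'
  · exact absurd (hij.trans hkl) (lt_irrefl _)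

section Walsh

variable {ι : Type*} [DecidableEq ι]

/-- The character of the group `(Finset ι, ∆)` indexed by `B`. -/
def walsh (B s : Finset ι) : ℚ := (-1) ^ #(B ∩ s)

theorem walsh_symmDiff_left (B C s : Finset ι) : walsh (B ∆ C) s = walsh B s * walsh C s := by
  rw [walsh, ← inf_eq_inter, inf_symmDiff_distrib_right, neg_one_pow_card_symmDiff]
  rfl

theorem walsh_comm (B s : Finset ι) : walsh B s = walsh s B := by
  rw [walsh, walsh, inter_comm]

theorem walsh_symmDiff_right (B s t : Finset ι) : walsh B (s ∆ t) = walsh B s * walsh B t := by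
  simp only [walsh_comm B, walsh_symmDiff_left]

@[simp]
theorem walsh_empty (s : Finset ι) : walsh ∅ s = 1 := by
  simp [walsh]

theorem walsh_mul_self (B s : Finset ι) : walsh B s * walsh B s = 1 := by
  rw [← walsh_symmDiff_left, symmDiff_self, bot_eq_empty, walsh_empty]

theorem walsh_singleton (i : ι) (s : Finset ι) : walsh {i} s = if i ∈ s then -1 else 1 := by
  split_ifs with h <;> simp [walsh, h]

theorem walsh_singleton_mul_walsh_singleton {i j : ι} (hij : i ≠ j) (s : Finset ι) :
    walsh {i} s * walsh {j} s = walsh {i, j} s := by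
  rw [← walsh_symmDiff_left]
  congr 1
  ext x
  simp only [mem_symmDiff, mem_singleton, mem_insert]
  grind

theorem sum_walsh_eq_zero {S : Finset (Finset ι)} {B : Finset ι} {a m : ι} (ha : a ∈ B)
    (hm : m ∉ B) (hS : ∀ s ∈ S, s ∆ {a, m} ∈ S) : ∑ s ∈ S, walsh B s = 0 := by
  have hflip : walsh B {a, m} = -1 := by
    have hinter : B ∩ {a, m} = {a} := by
      ext x
      simp only [mem_inter, mem_insert, mem_singleton]
      grind
    simp [walsh, hinter]
  refine sum_involution (fun s _ => s ∆ {a, m}) (fun s _ => ?_) (fun s _ _ => ?_) hS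
    (fun s _ => symmDiff_symmDiff_cancel_right _ _)
  · rw [walsh_symmDiff_right, hflip]; ring
  · rw [Ne, symmDiff_eq_left]; exact insert_ne_empty _ _

end Walsh

section EvenSubsets

variable {ι : Type*} [DecidableEq ι]

theorem even_card_symmDiff_pair_iff {a m : ι} (ham : a ≠ m) (s : Finset ι) :
    Even #(s ∆ {a, m}) ↔ Even #s := by
  have hneg : (-1 : ℚ) ≠ 1 := by norm_num
  rw [← neg_one_pow_eq_one_iff_even hneg, ← neg_one_pow_eq_one_iff_even hneg,
    neg_one_pow_card_symmDiff, card_pair ham, neg_one_sq, mul_one]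

variable [Fintype ι]

/-- When `#ι` is even, one representative of each pair `{s, sᶜ}` of even subsets. -/
def evenSubsetsContaining (i₀ : ι) : Finset (Finset ι) := {s | Even #s ∧ i₀ ∈ s}

theorem sum_walsh_evenSubsetsContaining (i₀ : ι) {B : Finset ι} (hB : 2 ≤ #B)
    (hBι : #B + 2 ≤ Fintype.card ι) : ∑ s ∈ evenSubsetsContaining i₀, walsh B s = 0 := by
  obtain ⟨a, ha, ha₀⟩ := exists_mem_ne (by omega : 1 < #B) i₀
  obtain ⟨m, -, hm⟩ := exists_mem_notMem_of_card_lt_card (s := insert i₀ B) (t := univ)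
    (by rw [card_univ]; have := card_insert_le i₀ B; omega)
  rw [mem_insert, not_or] at hm
  refine sum_walsh_eq_zero ha hm.2 fun s hs => ?_
  simp only [evenSubsetsContaining, mem_filter, mem_univ, true_and] at hs ⊢
  rw [even_card_symmDiff_pair_iff (ne_of_mem_of_not_mem ha hm.2), mem_symmDiff]
  simp [hs, ha₀.symm, Ne.symm hm.1]

theorem prod_filter_even_one_sub {R : Type*} [CommRing R] (hι : Even (Fintype.card ι)) (i₀ : ι)
    (f : Finset ι → R) (hf : ∀ s, f sᶜ = -f s) :
    ∏ s ∈ univ.filter (fun s : Finset ι => Even #s), (1 - f s)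
      = ∏ s ∈ evenSubsetsContaining i₀, (1 - f s ^ 2) := by
  have even_compl (s : Finset ι) : Even #sᶜ ↔ Even #s := by
    rw [card_compl, Nat.even_sub (card_le_univ s)]; simp [hι]
  have hcompl : ∏ s ∈ univ.filter (fun s : Finset ι => Even #s ∧ i₀ ∉ s), (1 - f s)
      = ∏ s ∈ evenSubsetsContaining i₀, (1 + f s) := by
    refine prod_nbij' compl compl (fun s hs => ?_) (fun s hs => ?_) (fun s _ => compl_compl s)
      (fun s _ => compl_compl s) (fun s _ => by rw [hf, sub_eq_add_neg])
    all_goals simp_all [evenSubsetsContaining]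
  rw [← prod_filter_mul_prod_filter_not _ (fun s => i₀ ∈ s), filter_filter, filter_filter,
    hcompl]
  exact prod_mul_distrib.symm.trans (prod_congr rfl fun s _ => by ring)

end EvenSubsets

section HomogeneousComponents

variable {σ R : Type*} [CommRing R]

theorem MvPolynomial.homogeneousComponent_mul_of_isHomogeneous {p : MvPolynomial σ R} {m : ℕ}
    (hp : p.IsHomogeneous m) (q : MvPolynomial σ R) (n : ℕ) :
    homogeneousComponent (m + n) (p * q) = p * homogeneousComponent n q := by
  conv_lhs => rw [← sum_homogeneousComponent q, mul_sum, map_sum]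
  have hpiece (i : ℕ) : homogeneousComponent (m + n) (p * homogeneousComponent i q)
      = if n = i then p * homogeneousComponent i q else 0 := by
    rw [homogeneousComponent_of_mem (hp.mul (homogeneousComponent_isHomogeneous i q))]
    exact if_congr Nat.add_left_cancel_iff rfl rfl
  rw [sum_congr rfl fun i _ => hpiece i, sum_ite_eq]
  split_ifs with hn
  · rfl
  · rw [homogeneousComponent_eq_zero n q (by simpa [Nat.lt_succ_iff] using hn), mul_zero]

theorem MvPolynomial.homogeneousComponent_prod_one_sub {ι : Type*} (A : Finset ι)
    (f : ι → MvPolynomial σ R) (hf : ∀ i ∈ A, (f i).IsHomogeneous 2) :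
    homogeneousComponent 0 (∏ i ∈ A, (1 - f i)) = 1 ∧
    homogeneousComponent 2 (∏ i ∈ A, (1 - f i)) = -∑ i ∈ A, f i ∧
    2 * homogeneousComponent 4 (∏ i ∈ A, (1 - f i)) = (∑ i ∈ A, f i) ^ 2 - ∑ i ∈ A, f i ^ 2 := by
  induction A using Finset.cons_induction with
  | empty =>
    simp [homogeneousComponent_zero, homogeneousComponent_eq_zero 2 (1 : MvPolynomial σ R),
      homogeneousComponent_eq_zero 4 (1 : MvPolynomial σ R)]
  | cons a A ha ih =>
    have hfa : (f a).IsHomogeneous 2 := hf a (mem_cons_self a A)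
    obtain ⟨ih0, ih2, ih4⟩ := ih fun i hi => hf i (mem_cons_of_mem hi)
    set Q := ∏ i ∈ A, (1 - f i)
    have hsplit : ∏ i ∈ cons a A ha, (1 - f i) = Q - f a * Q := by
      rw [prod_cons, one_sub_mul]
    have e0 : homogeneousComponent 0 (f a * Q) = 0 := by
      have hconst : constantCoeff (f a * Q) = 0 := by
        rw [map_mul, constantCoeff_eq, hfa.coeff_eq_zero (by simp), zero_mul]
      rw [homogeneousComponent_zero, ← constantCoeff_eq, hconst, map_zero]
    have e2 := homogeneousComponent_mul_of_isHomogeneous hfa Q 0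
    have e4 := homogeneousComponent_mul_of_isHomogeneous hfa Q 2
    simp only [hsplit, map_sub, sum_cons, e0, e2, e4, ih0, ih2]
    refine ⟨sub_zero 1, by ring, ?_⟩
    linear_combination ih4

end HomogeneousComponents

namespace HalfSpin

variable {n : ℕ}

noncomputable def weight (s : Finset (Fin n)) : MvPolynomial (Fin n) ℚ :=
  C 2⁻¹ * ∑ i, C (walsh {i} s) * X i

def pairs (n : ℕ) : Finset (Σ _ : Fin n, Fin n) := univ.sigma fun i => Ioi i

noncomputable def crossTerm (s : Finset (Fin n)) : MvPolynomial (Fin n) ℚ :=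
  ∑ p ∈ pairs n, C (walsh {p.1, p.2} s) * (X p.1 * X p.2)

noncomputable def sumSqMulSq (n : ℕ) : MvPolynomial (Fin n) ℚ :=
  ∑ p ∈ pairs n, X p.1 ^ 2 * X p.2 ^ 2

theorem weight_compl (s : Finset (Fin n)) : weight sᶜ = -weight s := by
  simp only [weight, walsh_singleton, mem_compl, ← mul_neg, ← sum_neg_distrib]
  congr 2 with i
  split_ifs <;> norm_num

theorem isHomogeneous_weight_sq (s : Finset (Fin n)) : (weight s ^ 2).IsHomogeneous 2 := by
  have h : (weight s).IsHomogeneous 1 :=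
    (IsHomogeneous.sum univ _ 1 fun i _ => isHomogeneous_C_mul_X _ _).C_mul _
  simpa using h.pow 2

theorem weight_sq (s : Finset (Fin n)) :
    weight s ^ 2 = C 4⁻¹ * (psum (Fin n) ℚ 2 + 2 * crossTerm s) := by
  have hdiag (i : Fin n) : (C (walsh {i} s) * X i) ^ 2 = X i ^ 2 := by
    rw [mul_pow, ← map_pow, sq (walsh _ _), walsh_mul_self, map_one, one_mul]
  have hoff (i j : Fin n) (hij : i < j) :
      C (walsh {i} s) * X i * (C (walsh {j} s) * X j) = C (walsh {i, j} s) * (X i * X j) := by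
    rw [mul_mul_mul_comm, ← C_mul, walsh_singleton_mul_walsh_singleton hij.ne]
  rw [weight, mul_pow, ← map_pow, sum_sq_eq_sum_sq_add_two_mul_sum_sum_Ioi, crossTerm, pairs,
    sum_sigma', psum]
  simp only [hdiag]
  rw [show (2⁻¹ : ℚ) ^ 2 = 4⁻¹ by norm_num]
  congr 3
  exact sum_congr rfl fun p hp => hoff p.1 p.2 (mem_Ioi.1 (mem_sigma.1 hp).2)

theorem lt_of_mem_pairs {p : Σ _ : Fin n, Fin n} (hp : p ∈ pairs n) : p.1 < p.2 := by
  simpa [pairs] using hp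

variable (i₀ : Fin n)

theorem sum_walsh_pair_mul_walsh_pair (hn : 6 ≤ n) {p q : Σ _ : Fin n, Fin n} (hp : p ∈ pairs n)
    (hq : q ∈ pairs n) :
    ∑ s ∈ evenSubsetsContaining i₀, walsh {p.1, p.2} s * walsh {q.1, q.2} s
      = if p = q then (#(evenSubsetsContaining i₀) : ℚ) else 0 := by
  simp only [← walsh_symmDiff_left]
  split_ifs with hpq
  · simp [hpq]
  · have hne : ({p.1, p.2} : Finset (Fin n)) ≠ {q.1, q.2} := fun h => hpq <| by
      obtain ⟨h1, h2⟩ := pair_eq_pair_of_lt (lt_of_mem_pairs hp) (lt_of_mem_pairs hq) h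
      exact Sigma.ext h1 (heq_of_eq h2)
    have hcard := card_symmDiff_add_two_mul_card_inter {p.1, p.2} {q.1, q.2}
    rw [card_pair (lt_of_mem_pairs hp).ne, card_pair (lt_of_mem_pairs hq).ne] at hcard
    have hpos : #(({p.1, p.2} : Finset (Fin n)) ∆ {q.1, q.2}) ≠ 0 := by
      rwa [Ne, card_eq_zero, ← bot_eq_empty, symmDiff_eq_bot]
    exact sum_walsh_evenSubsetsContaining i₀ (by omega) (by rw [Fintype.card_fin]; omega)

theorem sum_crossTerm (hn : 4 ≤ n) : ∑ s ∈ evenSubsetsContaining i₀, crossTerm s = 0 := by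
  simp only [crossTerm]
  rw [sum_comm]
  refine sum_eq_zero fun p hp => ?_
  have hcard : #({p.1, p.2} : Finset (Fin n)) = 2 := card_pair (lt_of_mem_pairs hp).ne
  rw [← sum_mul, ← map_sum, sum_walsh_evenSubsetsContaining i₀ hcard.ge
    (by rw [hcard, Fintype.card_fin]; omega), map_zero, zero_mul]

theorem sum_crossTerm_sq (hn : 6 ≤ n) :
    ∑ s ∈ evenSubsetsContaining i₀, crossTerm s ^ 2
      = C (#(evenSubsetsContaining i₀) : ℚ) * sumSqMulSq n := by
  have hexpand (s : Finset (Fin n)) : crossTerm s ^ 2 = ∑ p ∈ pairs n, ∑ q ∈ pairs n,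
      C (walsh {p.1, p.2} s * walsh {q.1, q.2} s) * (X p.1 * X p.2 * (X q.1 * X q.2)) := by
    rw [sq, crossTerm, sum_mul_sum]
    exact sum_congr rfl fun p _ => sum_congr rfl fun q _ => by rw [C_mul]; ring
  simp only [hexpand]
  rw [sum_comm, sumSqMulSq, mul_sum]
  refine sum_congr rfl fun p hp => ?_
  rw [sum_comm]
  simp only [← sum_mul, ← map_sum]
  rw [sum_congr rfl fun q hq => by rw [sum_walsh_pair_mul_walsh_pair i₀ hn hp hq]]
  simp only [apply_ite C, map_zero, ite_mul, zero_mul, sum_ite_eq, if_pos hp, map_natCast]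
  ring

theorem sum_weight_sq (hn : 4 ≤ n) :
    ∑ s ∈ evenSubsetsContaining i₀, weight s ^ 2
      = C (#(evenSubsetsContaining i₀) / 4 : ℚ) * psum (Fin n) ℚ 2 := by
  simp only [weight_sq]
  rw [← mul_sum, sum_add_distrib, ← mul_sum, sum_crossTerm i₀ hn, sum_const, nsmul_eq_mul,
    div_eq_inv_mul, C_mul, map_natCast]
  ring

theorem sum_weight_sq_sq (hn : 6 ≤ n) :
    ∑ s ∈ evenSubsetsContaining i₀, (weight s ^ 2) ^ 2
      = C (#(evenSubsetsContaining i₀) / 16 : ℚ) * (psum (Fin n) ℚ 2 ^ 2 + 4 * sumSqMulSq n) := by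
  have hsq (s : Finset (Fin n)) : (weight s ^ 2) ^ 2 = C 16⁻¹ *
      (psum (Fin n) ℚ 2 ^ 2 + 4 * psum (Fin n) ℚ 2 * crossTerm s + 4 * crossTerm s ^ 2) := by
    rw [weight_sq, mul_pow, ← map_pow]
    norm_num
    ring
  simp only [hsq]
  rw [← mul_sum, sum_add_distrib, sum_add_distrib, ← mul_sum, ← mul_sum,
    sum_crossTerm i₀ (by omega), sum_crossTerm_sq i₀ hn, sum_const, nsmul_eq_mul, div_eq_inv_mul,
    C_mul, map_natCast]
  ring

theorem psum_two_sq : psum (Fin n) ℚ 2 ^ 2 = psum (Fin n) ℚ 4 + 2 * sumSqMulSq n := by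
  rw [psum, sum_sq_eq_sum_sq_add_two_mul_sum_sum_Ioi, sumSqMulSq, pairs, sum_sigma', psum]
  simp only [← pow_mul]

end HalfSpin

open HalfSpin in
/-- In `ℚ[y₁,…,y₈]`, the product over all sign tuples with an even number of `−1`'s
(encoded by subsets `s ⊆ Fin 8` of even cardinality, `s` being the set of indices
with sign `−1`) of the factors `1 − (ε₁y₁+⋯+ε₈y₈)/2` has degree-2 homogeneous
component `−16·Σ yᵢ²` and degree-4 homogeneous component
`126·Σ yᵢ⁴ + 244·Σ_{i<j} yᵢ²yⱼ²`. -/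
theorem chern_class_E8_8_isotropy :
    let P : MvPolynomial (Fin 8) ℚ :=
      ∏ s ∈ Finset.univ.filter (fun s : Finset (Fin 8) => Even s.card),
        (1 - C (2⁻¹ : ℚ) * ∑ i : Fin 8, C (if i ∈ s then (-1 : ℚ) else 1) * X i)
    homogeneousComponent 2 P = C (-16 : ℚ) * ∑ i : Fin 8, X i ^ 2
    ∧ homogeneousComponent 4 P
      = C (126 : ℚ) * (∑ i : Fin 8, X i ^ 4)
        + C (244 : ℚ) * ∑ i : Fin 8, ∑ j ∈ Finset.Ioi i, X i ^ 2 * X j ^ 2 := by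
  intro P
  have hP : P = ∏ s ∈ evenSubsetsContaining (0 : Fin 8), (1 - weight s ^ 2) := by
    rw [← prod_filter_even_one_sub (by decide) 0 weight weight_compl]
    simp only [P, weight, walsh_singleton]
  have hcard : #(evenSubsetsContaining (0 : Fin 8)) = 64 := by decide
  obtain ⟨-, h2, h4⟩ := homogeneousComponent_prod_one_sub (evenSubsetsContaining (0 : Fin 8))
    (fun s => weight s ^ 2) fun s _ => isHomogeneous_weight_sq s
  have hU : ∑ i : Fin 8, ∑ j ∈ Ioi i, X i ^ 2 * X j ^ 2 = sumSqMulSq 8 := by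
    rw [sumSqMulSq, pairs, sum_sigma']
  rw [sum_weight_sq 0 (by norm_num), hcard] at h2
  rw [sum_weight_sq 0 (by norm_num), sum_weight_sq_sq 0 (by norm_num), hcard, mul_pow,
    psum_two_sq] at h4
  rw [hP, hU, ← psum, ← psum]
  constructor
  · rw [h2]
    norm_num
  · apply mul_left_cancel₀ (two_ne_zero' (MvPolynomial (Fin 8) ℚ))
    rw [h4]
    norm_num
    simp only [map_ofNat]
    ring
end

section
/- In ℚ[y₁,…,y₈], neither the polynomial y₁⁴+⋯+y₈⁴ nor the polynomial 126·Σ_{i=1}^8 y_i⁴ + 244·Σ_{1≤i<j≤8} y_i² y_j² belongs to the ideal generated by y₁²+⋯+y₈². -/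
open MvPolynomial

noncomputable def cpt : Fin 8 → ℂ := fun i => if i = 0 then 1 else if i = 1 then Complex.I else 0

lemma aeval_sum_sq_cpt :
    aeval cpt (∑ i : Fin 8, X i ^ 2 : MvPolynomial (Fin 8) ℚ) = 0 := by
  simp [Fin.sum_univ_eight, cpt, Complex.I_sq]

lemma not_mem_of_aeval_ne (p : MvPolynomial (Fin 8) ℚ)
    (h : aeval cpt p ≠ 0) :
    p ∉ Ideal.span {(∑ i : Fin 8, X i ^ 2 : MvPolynomial (Fin 8) ℚ)} := by
  intro hmem
  rw [Ideal.mem_span_singleton] at hmem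
  obtain ⟨r, hr⟩ := hmem
  apply h
  rw [hr, map_mul, aeval_sum_sq_cpt, zero_mul]

lemma sum_Ioi_eq (i : Fin 8) (f : Fin 8 → ℂ) :
    ∑ j ∈ Finset.Ioi i, f j = ∑ j : Fin 8, if i < j then f j else 0 := by
  rw [← Finset.sum_filter]
  congr 1
  ext j
  simp

/-- In `ℚ[y₁,…,y₈]`, neither `Σ yᵢ⁴` nor `126·Σ yᵢ⁴ + 244·Σ_{i<j} yᵢ²yⱼ²` belongs
to the ideal generated by `Σ yᵢ²`. -/
theorem not_mem_span_sum_squares_E8 :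
    ((∑ i : Fin 8, X i ^ 4 : MvPolynomial (Fin 8) ℚ)
        ∉ Ideal.span {(∑ i : Fin 8, X i ^ 2 : MvPolynomial (Fin 8) ℚ)})
    ∧ ((C (126 : ℚ) * (∑ i : Fin 8, X i ^ 4)
        + C (244 : ℚ) * ∑ i : Fin 8, ∑ j ∈ Finset.Ioi i, X i ^ 2 * X j ^ 2)
        ∉ Ideal.span {(∑ i : Fin 8, X i ^ 2 : MvPolynomial (Fin 8) ℚ)}) := by
  have h4 : Complex.I ^ 4 = 1 := by
    rw [show (4:ℕ) = 2*2 from rfl, pow_mul, Complex.I_sq]; norm_num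
  constructor
  · apply not_mem_of_aeval_ne
    simp [Fin.sum_univ_eight, cpt, h4]
  · apply not_mem_of_aeval_ne
    simp only [map_add, map_mul, map_sum, map_pow, aeval_X, aeval_C, sum_Ioi_eq]
    simp [Fin.sum_univ_eight, cpt, h4, Complex.I_sq]
    norm_num
end

section
/- In ℚ[y₁,…,y₈], the polynomial y₁⁴+⋯+y₈⁴ does not belong to the ideal generated by the two elements y₁+⋯+y₈ and y₁²+⋯+y₈². -/
open MvPolynomial

/-- In `ℚ[y₁,…,y₈]`, the polynomial `y₁⁴+⋯+y₈⁴` does not belong to the ideal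
generated by `y₁+⋯+y₈` and `y₁²+⋯+y₈²`. -/
theorem sum_pow_four_not_mem_span :
    (∑ i : Fin 8, X i ^ 4 : MvPolynomial (Fin 8) ℚ)
      ∉ Ideal.span {(∑ i : Fin 8, X i : MvPolynomial (Fin 8) ℚ),
                    (∑ i : Fin 8, X i ^ 2 : MvPolynomial (Fin 8) ℚ)} := by
  intro h
  obtain ⟨a, b, hab⟩ := Ideal.mem_span_pair.mp h
  have := congrArg (aeval (fun i : Fin 8 => Complex.I ^ (i : ℕ))) hab
  have h2 : Complex.I ^ 2 = -1 := Complex.I_sq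
  have h4 : Complex.I ^ 4 = 1 := by rw [show (4 = 2*2) from rfl, pow_mul, h2]; norm_num
  have h3 : Complex.I ^ 3 = -Complex.I := by rw [pow_succ, h2]; ring
  have h5 : Complex.I ^ 5 = Complex.I := by rw [pow_succ, h4, one_mul]
  have h6 : Complex.I ^ 6 = -1 := by rw [show (6 = 2+4) from rfl, pow_add, h2, h4]; ring
  have h7 : Complex.I ^ 7 = -Complex.I := by rw [pow_succ, h6]; ring
  simp only [map_add, map_mul, map_sum, map_pow, aeval_X, Fin.sum_univ_eight,
    Fin.val_zero, Fin.val_one, show ((2:Fin 8):ℕ) = 2 from rfl,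
    show ((3:Fin 8):ℕ) = 3 from rfl, show ((4:Fin 8):ℕ) = 4 from rfl,
    show ((5:Fin 8):ℕ) = 5 from rfl, show ((6:Fin 8):ℕ) = 6 from rfl,
    show ((7:Fin 8):ℕ) = 7 from rfl, pow_zero, pow_one,
    h2, h3, h4, h5, h6, h7] at this
  have h8 : (8:ℂ) = 0 := by linear_combination -this + 2*((aeval fun i : Fin 8 => Complex.I ^ (i:ℕ)) b)*h2 - 2*h4
  norm_num at h8
end

section
/- In ℚ[y₁,…,y₄], let P be the product of the factors (1 − (y_i+y_j)²)(1 − (y_i−y_j)²) over all pairs 1 ≤ i < j ≤ 4, times the product of the factors (1 − (ε₁y₁+ε₂y₂+ε₃y₃+y₄)²) over all triples (ε₁,ε₂,ε₃) ∈ {±1}³. Then the degree-2 homogeneous component of P equals −14·(y₁²+y₂²+y₃²+y₄²), and the degree-4 homogeneous component of P equals 91·Σ_{i=1}^4 y_i⁴ + 166·Σ_{1≤i<j≤4} y_i² y_j². -/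
/-!
Write `P = ∏ (1 - w²)` over one weight `w` from each of the 20 pairs `±w` of nonzero weights.
Each `w²` is homogeneous of degree 2, so the degree-2 and degree-4 components of `P` are `-p₁`
and `e₂ = (p₁² - p₂) / 2`, where `p₁ = ∑ w² = 14 ∑ yᵢ²` and `p₂ = ∑ w⁴ = 14 ∑ yᵢ⁴ + 60 ∑ yᵢ²yⱼ²`
are the power sums of the `w²`.
-/

open MvPolynomial Finset

namespace MvPolynomial

attribute [local instance] MvPolynomial.gradedAlgebra

variable {σ R : Type*}

theorem homogeneousComponent_mul_of_isHomogeneous_left [CommSemiring R]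
    {q : MvPolynomial σ R} {d : ℕ} (hq : q.IsHomogeneous d) (f : MvPolynomial σ R) (n : ℕ) :
    homogeneousComponent n (q * f) =
      if d ≤ n then q * homogeneousComponent (n - d) f else 0 := by
  simpa only [← DirectSum.Decomposition.decompose'_eq, decomposition.decompose'_apply] using
    DirectSum.coe_decompose_mul_of_left_mem (homogeneousSubmodule σ R) n (b := f) hq

variable [CommRing R] {ι : Type*} {q : ι → MvPolynomial σ R} {d : ℕ}

theorem homogeneousComponent_one_sub_mul {p : MvPolynomial σ R} (hp : p.IsHomogeneous d)
    (f : MvPolynomial σ R) (n : ℕ) :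
    homogeneousComponent n ((1 - p) * f) =
      homogeneousComponent n f - if d ≤ n then p * homogeneousComponent (n - d) f else 0 := by
  rw [sub_mul, one_mul, map_sub, homogeneousComponent_mul_of_isHomogeneous_left hp]

theorem homogeneousComponent_zero_prod_one_sub (s : Finset ι)
    (hq : ∀ k ∈ s, (q k).IsHomogeneous d) (hd : 0 < d) :
    homogeneousComponent 0 (∏ k ∈ s, (1 - q k)) = 1 := by
  classical
  induction s using Finset.induction with
  | empty => simp [homogeneousComponent_of_mem (isHomogeneous_one σ R)]
  | insert a s ha ih =>
    rw [prod_insert ha, homogeneousComponent_one_sub_mul (hq a (mem_insert_self a s)),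
      ih fun k hk => hq k (mem_insert_of_mem hk), if_neg hd.not_ge, sub_zero]

theorem homogeneousComponent_prod_one_sub_s13 (s : Finset ι)
    (hq : ∀ k ∈ s, (q k).IsHomogeneous d) (hd : 0 < d) :
    homogeneousComponent d (∏ k ∈ s, (1 - q k)) = -∑ k ∈ s, q k := by
  classical
  induction s using Finset.induction with
  | empty => simp [homogeneousComponent_of_mem (isHomogeneous_one σ R), hd.ne']
  | insert a s ha ih =>
    have hs : ∀ k ∈ s, (q k).IsHomogeneous d := fun k hk => hq k (mem_insert_of_mem hk)
    rw [prod_insert ha, homogeneousComponent_one_sub_mul (hq a (mem_insert_self a s)),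
      ih hs, if_pos le_rfl, Nat.sub_self, homogeneousComponent_zero_prod_one_sub s hs hd,
      sum_insert ha]
    ring

theorem two_mul_homogeneousComponent_two_mul_prod_one_sub (s : Finset ι)
    (hq : ∀ k ∈ s, (q k).IsHomogeneous d) (hd : 0 < d) :
    2 * homogeneousComponent (2 * d) (∏ k ∈ s, (1 - q k)) =
      (∑ k ∈ s, q k) ^ 2 - ∑ k ∈ s, q k ^ 2 := by
  classical
  induction s using Finset.induction with
  | empty => simp [homogeneousComponent_of_mem (isHomogeneous_one σ R), hd.ne']
  | insert a s ha ih =>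
    have hs : ∀ k ∈ s, (q k).IsHomogeneous d := fun k hk => hq k (mem_insert_of_mem hk)
    rw [prod_insert ha, homogeneousComponent_one_sub_mul (hq a (mem_insert_self a s)),
      if_pos (by omega), show 2 * d - d = d by omega, homogeneousComponent_prod_one_sub_s13 s hs hd,
      sum_insert ha, sum_insert ha]
    linear_combination ih hs

end MvPolynomial

theorem sum_Ioi_fin_four {M : Type*} [AddCommMonoid M] (f : Fin 4 → Fin 4 → M) :
    ∑ i : Fin 4, ∑ j ∈ Ioi i, f i j = f 0 1 + f 0 2 + f 0 3 + f 1 2 + f 1 3 + f 2 3 := by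
  simp [Fin.sum_univ_four, show Ioi (0 : Fin 4) = {1, 2, 3} by decide,
    show Ioi (1 : Fin 4) = {2, 3} by decide, show Ioi (2 : Fin 4) = {3} by decide,
    show Ioi (3 : Fin 4) = ∅ by decide, add_assoc]

theorem sum_finset_fin_three {M : Type*} [AddCommMonoid M] (f : Finset (Fin 3) → M) :
    ∑ s, f s = f ∅ + f {0} + f {1} + f {2} + f {0, 1} + f {0, 2} + f {1, 2} + f {0, 1, 2} := by
  rw [show (univ : Finset (Finset (Fin 3))) =
      {∅, {0}, {1}, {2}, {0, 1}, {0, 2}, {1, 2}, {0, 1, 2}} by decide]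
  simp +decide [add_assoc]

abbrev IsotropyWeightIndex := ((Σ _ : Fin 4, Fin 4) ⊕ (Σ _ : Fin 4, Fin 4)) ⊕ Finset (Fin 3)

def isotropyWeightIndices : Finset IsotropyWeightIndex :=
  ((univ.sigma Ioi).disjSum (univ.sigma Ioi)).disjSum univ

/-- One weight from each pair `±w` of nonzero weights: `yᵢ + yⱼ` and `yᵢ - yⱼ` for `i < j`, and
`ε₁y₁ + ε₂y₂ + ε₃y₃ + y₄`, where `s` is the set of indices with `εᵢ = -1`. -/
noncomputable def isotropyWeight : IsotropyWeightIndex → MvPolynomial (Fin 4) ℚ :=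
  Sum.elim (Sum.elim (fun p => X p.1 + X p.2) (fun p => X p.1 - X p.2))
    fun s => (∑ i : Fin 3, C (if i ∈ s then (-1 : ℚ) else 1) * X i.castSucc) + X 3

theorem isHomogeneous_isotropyWeight (k : IsotropyWeightIndex) :
    (isotropyWeight k).IsHomogeneous 1 := by
  rcases k with (⟨i, j⟩ | ⟨i, j⟩) | s
  · exact (isHomogeneous_X ℚ i).add (isHomogeneous_X ℚ j)
  · exact (isHomogeneous_X ℚ i).sub (isHomogeneous_X ℚ j)
  · exact (IsHomogeneous.sum _ _ 1 fun i _ => isHomogeneous_C_mul_X _ _).add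
      (isHomogeneous_X ℚ 3)

theorem prod_one_sub_isotropyWeight_sq :
    ∏ k ∈ isotropyWeightIndices, (1 - isotropyWeight k ^ 2) =
      (∏ i : Fin 4, ∏ j ∈ Ioi i, ((1 - (X i + X j) ^ 2) * (1 - (X i - X j) ^ 2))) *
        ∏ s : Finset (Fin 3),
          (1 - ((∑ i : Fin 3, C (if i ∈ s then (-1 : ℚ) else 1) * X i.castSucc) + X 3) ^ 2) := by
  simp only [isotropyWeightIndices, prod_disjSum, prod_sigma, isotropyWeight, Sum.elim_inl,
    Sum.elim_inr, prod_mul_distrib]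

theorem sum_isotropyWeight_sq :
    ∑ k ∈ isotropyWeightIndices, isotropyWeight k ^ 2 = 14 * ∑ i : Fin 4, X i ^ 2 := by
  simp only [isotropyWeightIndices, sum_disjSum, sum_sigma, isotropyWeight, Sum.elim_inl,
    Sum.elim_inr]
  rw [sum_Ioi_fin_four, sum_Ioi_fin_four, sum_finset_fin_three]
  simp [Fin.sum_univ_three, Fin.sum_univ_four]
  ring

theorem sum_isotropyWeight_pow_four :
    ∑ k ∈ isotropyWeightIndices, isotropyWeight k ^ 4 =
      14 * ∑ i : Fin 4, X i ^ 4 + 60 * ∑ i : Fin 4, ∑ j ∈ Ioi i, X i ^ 2 * X j ^ 2 := by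
  simp only [isotropyWeightIndices, sum_disjSum, sum_sigma, isotropyWeight, Sum.elim_inl,
    Sum.elim_inr]
  rw [sum_Ioi_fin_four, sum_Ioi_fin_four, sum_Ioi_fin_four, sum_finset_fin_three]
  simp [Fin.sum_univ_three, Fin.sum_univ_four]
  ring

theorem sq_sum_sq_fin_four {R : Type*} [CommRing R] (y : Fin 4 → R) :
    (∑ i, y i ^ 2) ^ 2 = ∑ i, y i ^ 4 + 2 * ∑ i : Fin 4, ∑ j ∈ Ioi i, y i ^ 2 * y j ^ 2 := by
  rw [sum_Ioi_fin_four]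
  simp only [Fin.sum_univ_four]
  ring

/-- In `ℚ[y₁,…,y₄]`, the product of the factors `(1−(yᵢ+yⱼ)²)(1−(yᵢ−yⱼ)²)` over
pairs `i < j` and of `(1−(ε₁y₁+ε₂y₂+ε₃y₃+y₄)²)` over all `(ε₁,ε₂,ε₃) ∈ {±1}³`
(encoded by subsets `s ⊆ Fin 3` of indices with sign `−1`) has degree-2
homogeneous component `−14·Σ yᵢ²` and degree-4 homogeneous component
`91·Σ yᵢ⁴ + 166·Σ_{i<j} yᵢ²yⱼ²`. -/
theorem chern_class_E6_6_isotropy :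
    let P : MvPolynomial (Fin 4) ℚ :=
      (∏ i : Fin 4, ∏ j ∈ Finset.Ioi i,
        ((1 - (X i + X j) ^ 2) * (1 - (X i - X j) ^ 2))) *
      ∏ s : Finset (Fin 3),
        (1 - ((∑ i : Fin 3, C (if i ∈ s then (-1 : ℚ) else 1) * X i.castSucc)
          + X 3) ^ 2)
    homogeneousComponent 2 P = C (-14 : ℚ) * ∑ i : Fin 4, X i ^ 2
    ∧ homogeneousComponent 4 P
      = C (91 : ℚ) * (∑ i : Fin 4, X i ^ 4)
        + C (166 : ℚ) * ∑ i : Fin 4, ∑ j ∈ Finset.Ioi i, X i ^ 2 * X j ^ 2 := by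
  intro P
  have hP : P = ∏ k ∈ isotropyWeightIndices, (1 - isotropyWeight k ^ 2) :=
    prod_one_sub_isotropyWeight_sq.symm
  have hq : ∀ k ∈ isotropyWeightIndices, (isotropyWeight k ^ 2).IsHomogeneous 2 :=
    fun k _ => (isHomogeneous_isotropyWeight k).pow 2
  constructor
  · rw [hP, homogeneousComponent_prod_one_sub_s13 _ hq two_pos, sum_isotropyWeight_sq]
    simp only [map_neg, map_ofNat, neg_mul]
  · apply mul_left_cancel₀ (two_ne_zero (α := MvPolynomial (Fin 4) ℚ))
    rw [hP, two_mul_homogeneousComponent_two_mul_prod_one_sub _ hq two_pos]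
    simp only [← pow_mul, sum_isotropyWeight_sq, sum_isotropyWeight_pow_four, map_ofNat]
    linear_combination 196 * sq_sum_sq_fin_four (X : Fin 4 → MvPolynomial (Fin 4) ℚ)
end

section
/- In ℚ[y₁,…,y₄], neither the polynomial y₁⁴+y₂⁴+y₃⁴+y₄⁴ nor the polynomial 91·Σ_{i=1}^4 y_i⁴ + 166·Σ_{1≤i<j≤4} y_i² y_j² belongs to the ideal generated by y₁²+y₂²+y₃²+y₄². -/
/-!
Every multiple of `y₁² + y₂² + y₃² + y₄²` vanishes at the complex isotropic point `(1, i, 0, 0)`,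
whereas there `Σ yᵢ⁴` takes the value `2` and `91·Σ yᵢ⁴ + 166·Σ_{i<j} yᵢ²yⱼ²` the value
`91·2 - 166 = 16`.
-/

open MvPolynomial Complex

theorem notMem_span_singleton_of_map_eq_zero {R S F : Type*} [CommSemiring R] [Semiring S]
    [FunLike F R S] [RingHomClass F R S] (φ : F) {f g : R} (hg : φ g = 0) (hf : φ f ≠ 0) :
    f ∉ Ideal.span {g} := fun h =>
  hf <| (Ideal.span_singleton_le_iff_mem (RingHom.ker φ)).2 hg h

def isotropicPoint : Fin 4 → ℂ := ![1, I, 0, 0]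

theorem aeval_isotropicPoint_sum_sq :
    aeval isotropicPoint (∑ i : Fin 4, X i ^ 2 : MvPolynomial (Fin 4) ℚ) = 0 := by
  simp [isotropicPoint, Fin.sum_univ_four]

theorem aeval_isotropicPoint_sum_pow_four :
    aeval isotropicPoint (∑ i : Fin 4, X i ^ 4 : MvPolynomial (Fin 4) ℚ) = 2 := by
  simp [isotropicPoint, Fin.sum_univ_four, I_pow_four, one_add_one_eq_two]

theorem aeval_isotropicPoint_sum_sq_mul_sq :
    aeval isotropicPoint (∑ i : Fin 4, ∑ j ∈ Finset.Ioi i, X i ^ 2 * X j ^ 2 :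
      MvPolynomial (Fin 4) ℚ) = -1 := by
  simp [isotropicPoint, ← Finset.filter_lt_eq_Ioi, Finset.sum_filter, Fin.sum_univ_four]

/-- In `ℚ[y₁,…,y₄]`, neither `Σ yᵢ⁴` nor `91·Σ yᵢ⁴ + 166·Σ_{i<j} yᵢ²yⱼ²` belongs
to the ideal generated by `y₁²+y₂²+y₃²+y₄²`. -/
theorem not_mem_span_sum_squares_E6 :
    ((∑ i : Fin 4, X i ^ 4 : MvPolynomial (Fin 4) ℚ)
        ∉ Ideal.span {(∑ i : Fin 4, X i ^ 2 : MvPolynomial (Fin 4) ℚ)})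
    ∧ ((C (91 : ℚ) * (∑ i : Fin 4, X i ^ 4)
        + C (166 : ℚ) * ∑ i : Fin 4, ∑ j ∈ Finset.Ioi i, X i ^ 2 * X j ^ 2)
        ∉ Ideal.span {(∑ i : Fin 4, X i ^ 2 : MvPolynomial (Fin 4) ℚ)}) := by
  constructor
  · refine notMem_span_singleton_of_map_eq_zero (aeval isotropicPoint)
      aeval_isotropicPoint_sum_sq ?_
    rw [aeval_isotropicPoint_sum_pow_four]
    exact two_ne_zero
  · refine notMem_span_singleton_of_map_eq_zero (aeval isotropicPoint)
      aeval_isotropicPoint_sum_sq ?_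
    simp only [map_add, map_mul, aeval_C, aeval_isotropicPoint_sum_pow_four,
      aeval_isotropicPoint_sum_sq_mul_sq]
    norm_num
end

section
/- In ℚ[y₁,y₂], the identity (y₂+3y₁)² + (y₂+y₁)² + (y₂−y₁)² + (y₂−3y₁)² = 20y₁² + 4y₂² holds; moreover neither y₁² nor 20y₁² + 4y₂² belongs to the ideal generated by 3y₁² + y₂². -/
open MvPolynomial

private noncomputable def G2v : Fin 2 → ℂ := ![1, Complex.I * Real.sqrt 3]

private lemma G2v_gen : aeval G2v (3 * X 0 ^ 2 + X 1 ^ 2 : MvPolynomial (Fin 2) ℚ) = 0 := by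
  have h3 : (Real.sqrt 3 : ℂ) ^ 2 = 3 := by
    rw [← Complex.ofReal_pow, Real.sq_sqrt (by norm_num)]
    norm_num
  simp only [map_add, map_mul, map_pow, aeval_X, map_ofNat, G2v,
    Matrix.cons_val_zero, Matrix.cons_val_one, Matrix.head_cons]
  rw [mul_pow, Complex.I_sq, h3]
  ring

private lemma G2_not_mem (p : MvPolynomial (Fin 2) ℚ) (hp : aeval G2v p ≠ 0) :
    p ∉ Ideal.span {(3 * X 0 ^ 2 + X 1 ^ 2 : MvPolynomial (Fin 2) ℚ)} := by
  intro h
  obtain ⟨c, hc⟩ := Ideal.mem_span_singleton'.mp h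
  apply hp
  rw [← hc, map_mul, G2v_gen, mul_zero]

/-- In `ℚ[y₁,y₂]` (with `y₁ = X 0`, `y₂ = X 1`), the identity
`(y₂+3y₁)² + (y₂+y₁)² + (y₂−y₁)² + (y₂−3y₁)² = 20y₁² + 4y₂²` holds; moreover
neither `y₁²` nor `20y₁² + 4y₂²` belongs to the ideal generated by `3y₁² + y₂²`. -/
theorem G2_first_pontryagin :
    ((X 1 + 3 * X 0) ^ 2 + (X 1 + X 0) ^ 2 + (X 1 - X 0) ^ 2 + (X 1 - 3 * X 0) ^ 2
      = (20 * X 0 ^ 2 + 4 * X 1 ^ 2 : MvPolynomial (Fin 2) ℚ))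
    ∧ ((X 0 ^ 2 : MvPolynomial (Fin 2) ℚ)
        ∉ Ideal.span {(3 * X 0 ^ 2 + X 1 ^ 2 : MvPolynomial (Fin 2) ℚ)})
    ∧ ((20 * X 0 ^ 2 + 4 * X 1 ^ 2 : MvPolynomial (Fin 2) ℚ)
        ∉ Ideal.span {(3 * X 0 ^ 2 + X 1 ^ 2 : MvPolynomial (Fin 2) ℚ)}) := by
  have h3 : (Real.sqrt 3 : ℂ) ^ 2 = 3 := by
    rw [← Complex.ofReal_pow, Real.sq_sqrt (by norm_num)]
    norm_num
  refine ⟨by ring, G2_not_mem _ ?_, G2_not_mem _ ?_⟩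
  · simp [G2v]
  · simp only [map_add, map_mul, map_pow, aeval_X, map_ofNat, G2v,
      Matrix.cons_val_zero, Matrix.cons_val_one, Matrix.head_cons]
    rw [mul_pow, Complex.I_sq, h3]
    norm_num
end

section
/- Let p, q ≥ 1 and work in R = ℚ[y₁,…,y_p, z₁,…,z_q]. Let I be the ideal generated by the elementary symmetric polynomials e₁,…,e_{p+q} of the full variable set {y₁,…,y_p, z₁,…,z_q}. If (p,q) ≠ (1,1), then the polynomial q·(y₁²+⋯+y_p²) + p·(z₁²+⋯+z_q²) − 2·(y₁+⋯+y_p)(z₁+⋯+z_q) does not belong to I; whereas for p = q = 1 the polynomial y² + z² − 2yz does belong to I. -/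
/-!
Substitute `xᵥ ↦ cᵥ t` for a point `c` at which `e₁` and `e₂` vanish. Each `eₖ` is homogeneous
of degree `k`, so it goes to `eₖ(c) tᵏ ∈ (t³)`, while a quadratic form `f` goes to `f(c) t²`.
Hence `f` lies outside the ideal as soon as `f(c) ≠ 0`. Over `ℂ`, with `ω` a primitive cube
root of unity, `c = (1, 0, …; ω, ω², 0, …)` has `e₁(c) = e₂(c) = 0` and
`P(c) = q - p + 2 ≠ 0` when `p ≤ q`; the case `q < p` is symmetric. For `p = q = 1`,
`P = (y - z)² = e₁² - 4 e₂`.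
-/

open MvPolynomial

theorem Polynomial.eq_zero_of_X_pow_succ_dvd_C_mul_X_pow {K : Type*} [CommRing K] {a : K}
    {n : ℕ} (h : Polynomial.X ^ (n + 1) ∣ Polynomial.C a * Polynomial.X ^ n) : a = 0 := by
  simpa using (Polynomial.X_pow_dvd_iff.1 h) n n.lt_succ_self

namespace MvPolynomial

variable {σ R K : Type*} [CommRing R]

theorem IsHomogeneous.aeval_C_mul_X [CommRing K] [Algebra R K] {φ : MvPolynomial σ R} {n : ℕ}
    (hφ : φ.IsHomogeneous n) (c : σ → K) :
    MvPolynomial.aeval (fun i => Polynomial.C (c i) * Polynomial.X) φ =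
      Polynomial.C (MvPolynomial.aeval c φ) * Polynomial.X ^ n := by
  conv_lhs => rw [φ.as_sum]
  conv_rhs => rw [φ.as_sum]
  simp only [map_sum, Finset.sum_mul, aeval_monomial]
  refine Finset.sum_congr rfl fun d hd => ?_
  have hdeg : ∑ i ∈ d.support, d i = n := by
    rw [← Finsupp.degree_apply, Finsupp.degree_eq_weight_one]; exact hφ (mem_support_iff.1 hd)
  simp only [Finsupp.prod, mul_pow, Finset.prod_mul_distrib, Finset.prod_pow_eq_pow_sum,
    ← map_pow, ← map_prod, Polynomial.algebraMap_apply, hdeg, Polynomial.C_mul, mul_assoc]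

variable [Fintype σ]

theorem isHomogeneous_esymm (n : ℕ) : (esymm σ R n).IsHomogeneous n := by
  refine IsHomogeneous.sum _ _ _ fun s hs => ?_
  have := IsHomogeneous.prod s (fun i => (X i : MvPolynomial σ R)) (fun _ => 1)
    fun i _ => isHomogeneous_X R i
  simpa [(Finset.mem_powersetCard.1 hs).2] using this

theorem two_mul_esymm_two : 2 * esymm σ R 2 = esymm σ R 1 ^ 2 - psum σ R 2 := by
  have h := mul_esymm_eq_sum σ R 2
  rw [esymm_one]
  simpa [Finset.Nat.sum_antidiagonal_eq_sum_range_succ_mk, Finset.sum_range_succ, psum_one,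
    esymm_zero, esymm_one, sq, add_comm, sub_eq_add_neg, pow_succ] using h

theorem aeval_esymm_two_eq_zero [Field K] [CharZero K] [Algebra R K] {c : σ → K}
    (h1 : ∑ i, c i = 0) (h2 : ∑ i, c i ^ 2 = 0) : aeval c (esymm σ R 2) = 0 := by
  have := congrArg (aeval c) (two_mul_esymm_two (σ := σ) (R := R))
  simpa [esymm_one, psum, h1, h2] using this

theorem notMem_span_esymm_of_isHomogeneous_two [CommRing K] [Algebra R K]
    {f : MvPolynomial σ R} (hf : f.IsHomogeneous 2) (c : σ → K)
    (h1 : aeval c (esymm σ R 1) = 0) (h2 : aeval c (esymm σ R 2) = 0) (hfc : aeval c f ≠ 0) :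
    f ∉ Ideal.span (Set.range fun k : ℕ => esymm σ R (k + 1)) := by
  set φ := aeval (R := R) fun i => Polynomial.C (c i) * Polynomial.X
  have hle : Ideal.span (Set.range fun k : ℕ => esymm σ R (k + 1)) ≤
      (Ideal.span {Polynomial.X ^ 3}).comap φ := by
    rw [Ideal.span_le]
    rintro _ ⟨k, rfl⟩
    simp only [SetLike.mem_coe, Ideal.mem_comap, Ideal.mem_span_singleton,
      φ, (isHomogeneous_esymm (k + 1)).aeval_C_mul_X]
    match k with
    | 0 => simp only [zero_add, h1, map_zero, zero_mul, dvd_zero]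
    | 1 => simp only [h2, map_zero, zero_mul, dvd_zero]
    | k + 2 => exact dvd_mul_of_dvd_right (pow_dvd_pow _ (by omega)) _
  intro hmem
  have hdvd : Polynomial.X ^ (2 + 1) ∣ φ f := Ideal.mem_span_singleton.1 (hle hmem)
  rw [hf.aeval_C_mul_X] at hdvd
  exact hfc (Polynomial.eq_zero_of_X_pow_succ_dvd_C_mul_X_pow hdvd)

end MvPolynomial

theorem exists_sum_eq_one_sum_sq_eq_one {K : Type*} [CommRing K] {n : ℕ} (hn : 1 ≤ n) :
    ∃ a : Fin n → K, ∑ i, a i = 1 ∧ ∑ i, a i ^ 2 = 1 := by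
  obtain ⟨m, rfl⟩ := Nat.exists_eq_add_of_le' hn
  exact ⟨Fin.cons 1 0, by simp [Fin.sum_univ_succ], by simp [Fin.sum_univ_succ]⟩

theorem exists_sum_eq_neg_one_sum_sq_eq_neg_one {K : Type*} [CommRing K] {ω : K}
    (hω : ω ^ 2 + ω + 1 = 0) {n : ℕ} (hn : 2 ≤ n) :
    ∃ b : Fin n → K, ∑ i, b i = -1 ∧ ∑ i, b i ^ 2 = -1 := by
  obtain ⟨m, rfl⟩ := Nat.exists_eq_add_of_le' hn
  refine ⟨Fin.cons ω (Fin.cons (ω ^ 2) 0), ?_, ?_⟩ <;>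
    simp only [Fin.sum_univ_succ, Fin.cons_zero, Fin.cons_succ, Pi.zero_apply,
      zero_pow two_ne_zero, Finset.sum_const_zero, add_zero]
  · linear_combination hω
  · linear_combination (ω ^ 2 - ω + 1) * hω

theorem Complex.exists_sq_add_self_add_one_eq_zero : ∃ ω : ℂ, ω ^ 2 + ω + 1 = 0 := by
  have h := (Complex.isPrimitiveRoot_exp 3 three_ne_zero).geom_sum_eq_zero (by norm_num)
  simp only [Finset.sum_range_succ, Finset.range_zero, Finset.sum_empty, pow_zero, pow_one] at h
  exact ⟨_, by linear_combination h⟩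

/-- The expanded form of `∑ᵢ ∑ⱼ (yᵢ - zⱼ)²` in `R[y₁,…,y_p,z₁,…,z_q]`. -/
noncomputable def firstPontryaginPoly (R : Type*) [CommRing R] (p q : ℕ) :
    MvPolynomial (Fin p ⊕ Fin q) R :=
  C (q : R) * (∑ i : Fin p, X (Sum.inl i) ^ 2)
    + C (p : R) * (∑ j : Fin q, X (Sum.inr j) ^ 2)
    - 2 * (∑ i : Fin p, X (Sum.inl i)) * (∑ j : Fin q, X (Sum.inr j))

namespace firstPontryaginPoly

variable {R K : Type*} [CommRing R] {p q : ℕ}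

theorem isHomogeneous : (firstPontryaginPoly R p q).IsHomogeneous 2 := by
  have hlin : ∀ {n : ℕ} (e : Fin n → Fin p ⊕ Fin q),
      (∑ i, X (e i) : MvPolynomial (Fin p ⊕ Fin q) R).IsHomogeneous 1 :=
    fun e => IsHomogeneous.sum _ _ _ fun i _ => isHomogeneous_X R (e i)
  have hsq : ∀ {n : ℕ} (e : Fin n → Fin p ⊕ Fin q),
      (∑ i, X (e i) ^ 2 : MvPolynomial (Fin p ⊕ Fin q) R).IsHomogeneous 2 :=
    fun e => IsHomogeneous.sum _ _ _ fun i _ => isHomogeneous_X_pow (e i) 2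
  have hcross := ((isHomogeneous_C _ (2 : R)).mul (hlin Sum.inl)).mul (hlin Sum.inr)
  rw [map_ofNat] at hcross
  exact (((hsq Sum.inl).C_mul _).add ((hsq Sum.inr).C_mul _)).sub hcross

theorem aeval_sumElim [CommRing K] [Algebra R K] (a : Fin p → K) (b : Fin q → K) :
    aeval (Sum.elim a b) (firstPontryaginPoly R p q) =
      q * ∑ i, a i ^ 2 + p * ∑ j, b j ^ 2 - 2 * (∑ i, a i) * ∑ j, b j := by
  simp [firstPontryaginPoly]

theorem notMem_span_esymm [Field K] [CharZero K] [Algebra R K] (a : Fin p → K) (b : Fin q → K)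
    (h1 : ∑ i, a i + ∑ j, b j = 0) (h2 : ∑ i, a i ^ 2 + ∑ j, b j ^ 2 = 0)
    (hab : q * ∑ i, a i ^ 2 + p * ∑ j, b j ^ 2 - 2 * (∑ i, a i) * ∑ j, b j ≠ 0) :
    firstPontryaginPoly R p q ∉
      Ideal.span (Set.range fun k : ℕ => esymm (Fin p ⊕ Fin q) R (k + 1)) := by
  have h1' : ∑ v, Sum.elim a b v = 0 := by simpa [Fintype.sum_sum_type] using h1
  have h2' : ∑ v, Sum.elim a b v ^ 2 = 0 := by simpa [Fintype.sum_sum_type] using h2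
  refine notMem_span_esymm_of_isHomogeneous_two isHomogeneous (Sum.elim a b)
    (by simpa [esymm_one] using h1') (aeval_esymm_two_eq_zero h1' h2') ?_
  rwa [aeval_sumElim]

theorem notMem_span_esymm_of_ne_one_one [Algebra R ℂ] (hp : 1 ≤ p) (hq : 1 ≤ q)
    (hpq : (p, q) ≠ (1, 1)) :
    firstPontryaginPoly R p q ∉
      Ideal.span (Set.range fun k : ℕ => esymm (Fin p ⊕ Fin q) R (k + 1)) := by
  have hpq' : p ≠ 1 ∨ q ≠ 1 := by rwa [Ne, Prod.mk.injEq, not_and_or] at hpq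
  obtain ⟨ω, hω⟩ := Complex.exists_sq_add_self_add_one_eq_zero
  rcases le_or_gt p q with hle | hlt
  · obtain ⟨a, ha, ha2⟩ := exists_sum_eq_one_sum_sq_eq_one (K := ℂ) hp
    obtain ⟨b, hb, hb2⟩ := exists_sum_eq_neg_one_sum_sq_eq_neg_one hω (by omega : 2 ≤ q)
    refine notMem_span_esymm a b (by simp [ha, hb]) (by simp [ha2, hb2]) ?_
    have hne : (q : ℂ) + 2 ≠ p := by exact_mod_cast (by omega : q + 2 ≠ p)
    rw [ha, hb, ha2, hb2]
    exact fun h => hne (by linear_combination h)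
  · obtain ⟨a, ha, ha2⟩ := exists_sum_eq_neg_one_sum_sq_eq_neg_one hω (by omega : 2 ≤ p)
    obtain ⟨b, hb, hb2⟩ := exists_sum_eq_one_sum_sq_eq_one (K := ℂ) hq
    refine notMem_span_esymm a b (by simp [ha, hb]) (by simp [ha2, hb2]) ?_
    have hne : (p : ℂ) + 2 ≠ q := by exact_mod_cast (by omega : p + 2 ≠ q)
    rw [ha, hb, ha2, hb2]
    exact fun h => hne (by linear_combination h)

theorem one_one_mem_span_esymm :
    firstPontryaginPoly R 1 1 ∈
      Ideal.span (Set.range fun k : Fin (1 + 1) => esymm (Fin 1 ⊕ Fin 1) R ((k : ℕ) + 1)) := by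
  have hgen (k : Fin (1 + 1)) := Ideal.subset_span (Set.mem_range_self
    (f := fun k : Fin (1 + 1) => esymm (Fin 1 ⊕ Fin 1) R ((k : ℕ) + 1)) k)
  have hP : firstPontryaginPoly R 1 1 =
      esymm _ R 1 * esymm _ R 1 - 2 * (2 * esymm (Fin 1 ⊕ Fin 1) R 2) := by
    rw [two_mul_esymm_two]
    simp only [firstPontryaginPoly, Nat.cast_one, C_1, Finset.univ_unique, Fin.default_eq_zero,
      Finset.sum_singleton, one_mul, esymm_one, Fintype.sum_sum_type, psum]
    ring
  rw [hP]
  exact Ideal.sub_mem _ (Ideal.mul_mem_left _ _ (hgen 0))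
    (Ideal.mul_mem_left _ _ (Ideal.mul_mem_left _ _ (hgen 1)))

end firstPontryaginPoly

/-- In `ℚ[y₁,…,y_p,z₁,…,z_q]` (`p,q ≥ 1`), let `I` be the ideal generated by the
elementary symmetric polynomials `e₁,…,e_{p+q}` of all the variables and let
`P = q·Σyᵢ² + p·Σzⱼ² − 2·(Σyᵢ)(Σzⱼ)`. If `(p,q) ≠ (1,1)` then `P ∉ I`, whereas
for `p = q = 1` (where `P = y² + z² − 2yz`) we have `P ∈ I`. -/
theorem SU_pq_first_pontryagin (p q : ℕ) (hp : 1 ≤ p) (hq : 1 ≤ q) :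
    let P : MvPolynomial (Fin p ⊕ Fin q) ℚ :=
      C (q : ℚ) * (∑ i : Fin p, X (Sum.inl i) ^ 2)
        + C (p : ℚ) * (∑ j : Fin q, X (Sum.inr j) ^ 2)
        - 2 * (∑ i : Fin p, X (Sum.inl i)) * (∑ j : Fin q, X (Sum.inr j))
    let I : Ideal (MvPolynomial (Fin p ⊕ Fin q) ℚ) :=
      Ideal.span (Set.range fun k : Fin (p + q) =>
        esymm (Fin p ⊕ Fin q) ℚ ((k : ℕ) + 1))
    ((p, q) ≠ (1, 1) → P ∉ I) ∧ ((p, q) = (1, 1) → P ∈ I) := by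
  intro P I
  refine ⟨fun hpq hP => firstPontryaginPoly.notMem_span_esymm_of_ne_one_one hp hq hpq
    (Ideal.span_mono (Set.range_comp_subset_range Fin.val _) hP), ?_⟩
  rintro ⟨⟩
  exact firstPontryaginPoly.one_one_mem_span_esymm
end

section
/- Let n ≥ 2 and work in ℚ[y₁,…,y_n]. Let I be the ideal generated by the elementary symmetric polynomials e₁(y₁²,…,y_n²),…,e_n(y₁²,…,y_n²) of the squares of the variables. Then the polynomial (n+3)·(y₁²+⋯+y_n²) + 2·Σ_{1≤i<j≤n} y_i y_j does not belong to I. -/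
set_option synthInstance.maxHeartbeats 1000000
set_option maxHeartbeats 2000000
set_option maxRecDepth 8000

open MvPolynomial

namespace Sp2nAux

open TrivSqZeroExt

noncomputable abbrev R := DualNumber (DualNumber ℚ)

noncomputable def a : R := DualNumber.eps
noncomputable def b : R := inl DualNumber.eps

lemma ha : a * a = 0 := DualNumber.eps_mul_eps
lemma hb : b * b = 0 := by rw [b, inl_mul_inl, DualNumber.eps_mul_eps, inl_zero]
lemma hab : a * b = inr DualNumber.eps := by
  rw [a, b, DualNumber.eps, inr_mul_inl, op_smul_eq_mul, one_mul]

lemma two_ab_ne : 2 * (a * b) ≠ 0 := by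
  intro h
  rw [hab, two_mul] at h
  have h2 := congrArg TrivSqZeroExt.snd h
  rw [snd_add, snd_inr, snd_zero] at h2
  have h3 := congrArg TrivSqZeroExt.snd h2
  rw [snd_add, DualNumber.eps, snd_inr, snd_zero] at h3
  norm_num at h3

noncomputable def f (n : ℕ) [NeZero n] : Fin n → R :=
  fun i => if i = 0 then a else if i = 1 then b else 0

lemma f_sq (n : ℕ) [NeZero n] (i : Fin n) : f n i ^ 2 = 0 := by
  rw [sq, f]
  split_ifs with h1 h2
  · exact ha
  · exact hb
  · exact zero_mul 0

end Sp2nAux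

/-- In `ℚ[y₁,…,yₙ]` (`n ≥ 2`), the polynomial
`(n+3)·(y₁²+⋯+yₙ²) + 2·Σ_{i<j} yᵢyⱼ` does not belong to the ideal generated by
the elementary symmetric polynomials `e₁(y₁²,…,yₙ²),…,eₙ(y₁²,…,yₙ²)` of the
squares of the variables. -/
theorem Sp2n_first_pontryagin (n : ℕ) (hn : 2 ≤ n) :
    (C ((n : ℚ) + 3) * (∑ i : Fin n, X i ^ 2)
        + 2 * ∑ i : Fin n, ∑ j ∈ Finset.Ioi i, X i * X j : MvPolynomial (Fin n) ℚ)
      ∉ Ideal.span (Set.range fun k : Fin n =>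
          aeval (fun i : Fin n => (X i : MvPolynomial (Fin n) ℚ) ^ 2)
            (esymm (Fin n) ℚ ((k : ℕ) + 1))) := by
  classical
  haveI : NeZero n := ⟨by omega⟩
  intro hmem
  set φ : MvPolynomial (Fin n) ℚ →ₐ[ℚ] Sp2nAux.R := aeval (Sp2nAux.f n) with hφ
  -- generators die under φ
  have hgen : ∀ p ∈ (Set.range fun k : Fin n =>
      aeval (fun i : Fin n => (X i : MvPolynomial (Fin n) ℚ) ^ 2)
        (esymm (Fin n) ℚ ((k : ℕ) + 1))), φ p = 0 := by
    rintro p ⟨k, rfl⟩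
    dsimp only
    have hesymm : esymm (Fin n) ℚ ((k : ℕ) + 1)
        = ∑ t ∈ Finset.powersetCard ((k : ℕ) + 1) Finset.univ,
            ∏ i ∈ t, (X i : MvPolynomial (Fin n) ℚ) := rfl
    rw [hesymm]
    simp only [hφ, map_sum, map_prod, map_pow, aeval_X]
    refine Finset.sum_eq_zero fun t ht => ?_
    rw [Finset.prod_congr rfl fun i _ => Sp2nAux.f_sq n i, Finset.prod_const, zero_pow]
    have := (Finset.mem_powersetCard.mp ht).2
    omega
  -- hence φ kills our element
  have hker : φ (C ((n : ℚ) + 3) * (∑ i : Fin n, X i ^ 2)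
      + 2 * ∑ i : Fin n, ∑ j ∈ Finset.Ioi i, X i * X j) = 0 := by
    have hle : Ideal.span (Set.range fun k : Fin n =>
        aeval (fun i : Fin n => (X i : MvPolynomial (Fin n) ℚ) ^ 2)
          (esymm (Fin n) ℚ ((k : ℕ) + 1))) ≤ RingHom.ker φ.toRingHom := by
      rw [Ideal.span_le]
      intro p hp
      exact hgen p hp
    exact hle hmem
  -- basic `Fin` facts
  have h01 : (0 : Fin n) < 1 := by
    rw [Fin.lt_def, Fin.val_zero, Fin.val_one']
    have : 1 % n = 1 := Nat.mod_eq_of_lt (by omega)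
    omega
  have hf0 : Sp2nAux.f n 0 = Sp2nAux.a := if_pos rfl
  have hf1 : Sp2nAux.f n 1 = Sp2nAux.b := by
    rw [Sp2nAux.f, if_neg (Fin.ne_of_gt h01), if_pos rfl]
  have hfz : ∀ j : Fin n, j ≠ 0 → j ≠ 1 → Sp2nAux.f n j = 0 := by
    intro j hj0 hj1
    rw [Sp2nAux.f, if_neg hj0, if_neg hj1]
  -- compute the double sum
  have hdsum : (∑ i : Fin n, ∑ j ∈ Finset.Ioi i, Sp2nAux.f n i * Sp2nAux.f n j)
      = Sp2nAux.a * Sp2nAux.b := by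
    rw [Finset.sum_eq_single (0 : Fin n)]
    · rw [Finset.sum_eq_single (1 : Fin n)]
      · rw [hf0, hf1]
      · intro j hj hj1
        rw [Finset.mem_Ioi] at hj
        rw [hfz j (Fin.ne_of_gt hj) hj1, mul_zero]
      · intro h1
        exact absurd (Finset.mem_Ioi.mpr h01) h1
    · intro i _ hi0
      refine Finset.sum_eq_zero fun j hj => ?_
      rw [Finset.mem_Ioi] at hj
      by_cases hi1 : i = 1
      · subst hi1
        have hj0 : j ≠ 0 := Fin.ne_of_gt (lt_trans h01 hj)
        have hj1 : j ≠ 1 := Fin.ne_of_gt hj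
        rw [hfz j hj0 hj1, mul_zero]
      · rw [hfz i hi0 hi1, zero_mul]
    · intro h0
      exact absurd (Finset.mem_univ _) h0
  -- evaluate φ on the element
  rw [map_add, map_mul, map_mul, map_sum, hφ, aeval_C] at hker
  simp only [map_pow, aeval_X, map_sum, map_mul, map_ofNat] at hker
  rw [Finset.sum_congr rfl (fun i _ => Sp2nAux.f_sq n i), Finset.sum_const, smul_zero,
    mul_zero, zero_add, hdsum] at hker
  exact Sp2nAux.two_ab_ne hker
end
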